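/- arXiv:2310.00669 — 7 statements merged into one kernel-verified Lean document; each statement's English description precedes it below -/
import Mathlib

section
/- Let Y_1,...,Y_n be independent random variables and M > 0 with |Y_k - E[Y_k]| ≤ M almost surely for every k. Let Z_i = Y_1 + ... + Y_i. Then for every t > 0, P(max_{1≤i≤n} |Z_i - E[Z_i]| ≥ t) ≤ 2 exp(- t² / (2 Var(Z_n) + (2/3) M t)). -/
open MeasureTheory ProbabilityTheory Finset
open scoped Nat ENNReal NNReal

private lemma aux_fact (m : ℕ) : 2 * 3 ^ m ≤ (m + 2)! := by
  induction m with
  | zero => simp [Nat.factorial]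
  | succ k ih =>
      have : (k + 3)! = (k + 3) * (k + 2)! := rfl
      calc 2 * 3 ^ (k + 1) = 3 * (2 * 3 ^ k) := by ring
      _ ≤ 3 * (k + 2)! := by omega
      _ ≤ (k + 3) * (k + 2)! := by
          have := Nat.factorial_pos (k + 2); nlinarith
      _ = (k + 2 + 1)! := rfl

private lemma aux_exp_le {c y : ℝ} (hc3 : c < 3) (hyc : |y| ≤ c) :
    Real.exp y ≤ 1 + y + y ^ 2 / (2 * (1 - c / 3)) := by
  have hc0 : 0 ≤ c := le_trans (abs_nonneg y) hyc
  have hr : c / 3 < 1 := by linarith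
  have hr0 : 0 ≤ c / 3 := by linarith
  have hsum : Summable (fun n : ℕ => y ^ n / n !) := Real.summable_pow_div_factorial y
  have hexp : Real.exp y = ∑' n : ℕ, y ^ n / n ! := by
    rw [Real.exp_eq_exp_ℝ, NormedSpace.exp_eq_tsum_div]
  have hsum2 : Summable (fun n : ℕ => y ^ (n + 2) / (n + 2)!) := by
    have := (summable_nat_add_iff 2).2 hsum
    exact this
  have hsplit : (∑' n : ℕ, y ^ n / n !) =
      1 + y + ∑' n : ℕ, y ^ (n + 2) / (n + 2)! := by
    rw [← Summable.sum_add_tsum_nat_add 2 hsum]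
    simp [Finset.sum_range_succ, Nat.factorial]
  have hterm : ∀ n : ℕ, y ^ (n + 2) / (n + 2)! ≤ y ^ 2 / 2 * (c / 3) ^ n := by
    intro n
    have h1 : y ^ (n + 2) ≤ y ^ 2 * c ^ n := by
      calc y ^ (n + 2) ≤ |y ^ (n + 2)| := le_abs_self _
      _ = |y| ^ 2 * |y| ^ n := by rw [abs_pow]; ring
      _ ≤ |y| ^ 2 * c ^ n := by gcongr
      _ = y ^ 2 * c ^ n := by rw [sq_abs]
    have h2 : (2 * 3 ^ n : ℝ) ≤ (n + 2)! := by
      have := aux_fact n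
      calc (2 * 3 ^ n : ℝ) = ((2 * 3 ^ n : ℕ) : ℝ) := by push_cast; ring
      _ ≤ ((n + 2)! : ℝ) := by exact_mod_cast this
    have hfac : (0:ℝ) < (n + 2)! := by positivity
    rw [div_le_iff₀ hfac]
    calc y ^ (n + 2) ≤ y ^ 2 * c ^ n := h1
    _ = (y ^ 2 / 2 * (c / 3) ^ n) * (2 * 3 ^ n) := by
        field_simp
        rw [mul_assoc, ← mul_pow, div_mul_cancel₀ c (by norm_num : (3:ℝ) ≠ 0)]
    _ ≤ (y ^ 2 / 2 * (c / 3) ^ n) * (n + 2)! := by gcongr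
  have hgeo : Summable (fun n : ℕ => y ^ 2 / 2 * (c / 3) ^ n) :=
    (summable_geometric_of_lt_one hr0 hr).mul_left _
  have : (∑' n : ℕ, y ^ (n + 2) / (n + 2)!) ≤ ∑' n : ℕ, y ^ 2 / 2 * (c / 3) ^ n :=
    Summable.tsum_le_tsum hterm hsum2 hgeo
  have hgeoval : (∑' n : ℕ, y ^ 2 / 2 * (c / 3) ^ n) = y ^ 2 / (2 * (1 - c / 3)) := by
    rw [tsum_mul_left, tsum_geometric_of_lt_one hr0 hr]
    field_simp
  rw [hexp, hsplit]
  rw [hgeoval] at this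
  linarith

private lemma aux_mgf {Ω : Type*} [MeasureSpace Ω] [IsProbabilityMeasure (ℙ : Measure Ω)]
    {X : Ω → ℝ} {M s : ℝ} (hmeas : Measurable X) (hmean : ∫ ω, X ω = 0)
    (hbdd : ∀ᵐ ω, |X ω| ≤ M) (hs : 0 ≤ s) (hsM : s * M < 3) :
    ∫ ω, Real.exp (s * X ω) ≤ Real.exp (variance X ℙ * s ^ 2 / (2 * (1 - s * M / 3))) := by
  have hX2 : MemLp X 2 ℙ := by
    refine MemLp.of_bound hmeas.aestronglyMeasurable M ?_
    simpa [Real.norm_eq_abs] using hbdd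
  have hXint : Integrable X ℙ := hX2.integrable one_le_two
  have hXsq : Integrable (fun ω => X ω ^ 2) ℙ := by
    simpa [Pi.pow_apply] using hX2.integrable_sq
  have hD : 0 < 2 * (1 - s * M / 3) := by linarith
  set D := 2 * (1 - s * M / 3) with hDdef
  have hexp_int : Integrable (fun ω => Real.exp (s * X ω)) ℙ := by
    refine Integrable.mono' (integrable_const (Real.exp (s * M)))
      (Real.measurable_exp.comp (hmeas.const_mul s)).aestronglyMeasurable ?_
    filter_upwards [hbdd] with ω hω
    rw [Real.norm_eq_abs, abs_of_pos (Real.exp_pos _)]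
    refine Real.exp_le_exp.2 ?_
    calc s * X ω ≤ s * |X ω| := by
          refine mul_le_mul_of_nonneg_left (le_abs_self _) hs
    _ ≤ s * M := mul_le_mul_of_nonneg_left hω hs
  have hle : ∫ ω, Real.exp (s * X ω) ≤
      ∫ ω, (1 + s * X ω + (s ^ 2 / D) * X ω ^ 2) := by
    refine integral_mono_ae hexp_int ?_ ?_
    · exact (integrable_const 1).add (hXint.const_mul s) |>.add (hXsq.const_mul _)
    · filter_upwards [hbdd] with ω hω
      have hy : |s * X ω| ≤ s * M := by
        rw [abs_mul, abs_of_nonneg hs]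
        exact mul_le_mul_of_nonneg_left hω hs
      have := aux_exp_le hsM hy
      calc Real.exp (s * X ω) ≤ 1 + s * X ω + (s * X ω) ^ 2 / D := this
      _ = 1 + s * X ω + (s ^ 2 / D) * X ω ^ 2 := by ring
  have hvar : variance X ℙ = ∫ ω, X ω ^ 2 := by
    have := variance_eq_sub hX2
    simpa [hmean, Pi.pow_apply] using this
  have hcalc : ∫ ω, (1 + s * X ω + (s ^ 2 / D) * X ω ^ 2) =
      1 + (s ^ 2 / D) * ∫ ω, X ω ^ 2 := by
    have h1 : Integrable (fun ω => 1 + s * X ω) ℙ := by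
      simpa using (integrable_const (1:ℝ)).add (hXint.const_mul s)
    rw [integral_add h1 (hXsq.const_mul _), integral_add (integrable_const 1) (hXint.const_mul s),
      integral_const, integral_const_mul, integral_const_mul, hmean]
    simp
  rw [hcalc] at hle
  refine hle.trans ?_
  have h1 : variance X ℙ * s ^ 2 / D + 1 ≤ Real.exp (variance X ℙ * s ^ 2 / D) :=
    Real.add_one_le_exp _
  rw [hvar] at h1 ⊢
  have h2 : s ^ 2 / D * ∫ ω, X ω ^ 2 = (∫ ω, X ω ^ 2) * s ^ 2 / D := by ring
  linarith

private lemma aux_prod_integral {Ω : Type*} [MeasureSpace Ω]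
    [IsProbabilityMeasure (ℙ : Measure Ω)] (G : ℕ → Ω → ℝ) (hmeas : ∀ k, Measurable (G k))
    (hindep : iIndepFun G ℙ) (hint : ∀ k, Integrable (G k) ℙ)
    (s : Finset ℕ) :
    Integrable (fun ω => ∏ k ∈ s, G k ω) ℙ ∧
      ∫ ω, ∏ k ∈ s, G k ω = ∏ k ∈ s, ∫ ω, G k ω := by
  classical
  induction s using Finset.induction_on with
  | empty => simp
  | @insert a s ha ih =>
      have hIF : IndepFun (∏ j ∈ s, G j) (G a) ℙ :=
        hindep.indepFun_finsetProd_of_notMem hmeas ha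
      have hPeq : (∏ j ∈ s, G j) = fun ω => ∏ j ∈ s, G j ω := by
        funext ω; exact Finset.prod_apply ω s G
      have hPint : Integrable (∏ j ∈ s, G j) ℙ := by rw [hPeq]; exact ih.1
      have hmul : Integrable ((∏ j ∈ s, G j) * G a) ℙ := hIF.integrable_mul hPint (hint a)
      have hprod_eq : (fun ω => ∏ k ∈ insert a s, G k ω) = (∏ j ∈ s, G j) * G a := by
        funext ω
        rw [Finset.prod_insert ha]
        simp [hPeq, mul_comm]
      constructor
      · rw [hprod_eq]; exact hmul
      · rw [hprod_eq, Finset.prod_insert ha]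
        have := hIF.integral_mul_eq_mul_integral hPint.aestronglyMeasurable (hint a).aestronglyMeasurable
        calc ∫ ω, ((∏ j ∈ s, G j) * G a) ω = ∫ ω, (∏ j ∈ s, G j) ω * G a ω := rfl
        _ = (∫ ω, (∏ j ∈ s, G j) ω) * ∫ ω, G a ω := this
        _ = (∏ k ∈ s, ∫ ω, G k ω) * ∫ ω, G a ω := by rw [hPeq, ih.2]
        _ = (∫ ω, G a ω) * ∏ k ∈ s, ∫ ω, G k ω := mul_comm _ _

private lemma aux_onesided {Ω : Type*} [MeasureSpace Ω] [IsProbabilityMeasure (ℙ : Measure Ω)]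
    (n : ℕ) (X : ℕ → Ω → ℝ) (M s t : ℝ) (hM : 0 < M) (hs : 0 ≤ s) (hsM : s * M < 3)
    (hmeas : ∀ k, Measurable (X k)) (hindep : iIndepFun X ℙ)
    (hmean : ∀ k, ∫ ω, X k ω = 0) (hbdd : ∀ k, ∀ᵐ ω, |X k ω| ≤ M) (ht : 0 < t) :
    ℙ {ω | ∃ i ∈ Icc 1 n, t ≤ ∑ k ∈ Icc 1 i, X k ω} ≤
      ENNReal.ofReal (Real.exp (-(s * t) +
        (∑ k ∈ Icc 1 n, variance (X k) ℙ) * s ^ 2 / (2 * (1 - s * M / 3)))) := by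
  have hXsm : ∀ k, StronglyMeasurable (X k) := fun k => (hmeas k).stronglyMeasurable
  set ℱ := MeasureTheory.Filtration.natural X hXsm with hℱ
  set f : ℕ → Ω → ℝ := fun i ω => Real.exp (s * ∑ k ∈ Icc 1 i, X k ω) with hf
  have hXint : ∀ k, Integrable (X k) ℙ := by
    intro k
    refine Integrable.mono' (integrable_const M) (hmeas k).aestronglyMeasurable ?_
    filter_upwards [hbdd k] with ω hω using by rwa [Real.norm_eq_abs]
  have hall : ∀ᵐ ω, ∀ k, |X k ω| ≤ M := ae_all_iff.2 hbdd
  have hWbdd : ∀ i : ℕ, ∀ᵐ ω, |∑ k ∈ Icc 1 i, X k ω| ≤ i * M := by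
    intro i
    filter_upwards [hall] with ω hω
    calc |∑ k ∈ Icc 1 i, X k ω| ≤ ∑ k ∈ Icc 1 i, |X k ω| := Finset.abs_sum_le_sum_abs _ _
    _ ≤ ∑ k ∈ Icc 1 i, M := Finset.sum_le_sum fun k _ => hω k
    _ = i * M := by
        rw [Finset.sum_const, Nat.card_Icc]
        simp [nsmul_eq_mul]
  have hfbdd : ∀ i : ℕ, ∀ᵐ ω, ‖f i ω‖ ≤ Real.exp (s * (i * M)) := by
    intro i
    filter_upwards [hWbdd i] with ω hω
    rw [Real.norm_eq_abs, abs_of_pos (Real.exp_pos _)]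
    refine Real.exp_le_exp.2 ?_
    refine mul_le_mul_of_nonneg_left ((le_abs_self _).trans hω) hs
  have hf_int : ∀ i, Integrable (f i) ℙ := by
    intro i
    refine Integrable.mono' (integrable_const (Real.exp (s * (i * M))))
      (Real.measurable_exp.comp ((Finset.measurable_sum _ fun k _ => hmeas k).const_mul s)
        |>.aestronglyMeasurable) (hfbdd i)
  have hadp : StronglyAdapted ℱ f := by
    intro i
    have hXad : ∀ k, k ≤ i → Measurable[ℱ i] (X k) := by
      intro k hk
      exact ((MeasureTheory.Filtration.stronglyAdapted_natural hXsm k).mono (ℱ.mono hk)).measurable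
    have : Measurable[ℱ i] (f i) := by
      refine Real.measurable_exp.comp ?_
      refine Measurable.const_mul ?_ s
      exact Finset.measurable_sum _ fun k hk => hXad k (Finset.mem_Icc.1 hk).2
    exact this.stronglyMeasurable
  -- the submartingale property
  have hsub : Submartingale f ℱ ℙ := by
    refine submartingale_nat hadp hf_int fun i => ?_
    set G : Ω → ℝ := (fun x => Real.exp (s * x)) ∘ X (i + 1) with hG
    have hG_int : Integrable G ℙ := by
      refine Integrable.mono' (integrable_const (Real.exp (s * M)))
        ((Real.measurable_exp.comp (measurable_id.const_mul s)).comp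
          (hmeas (i + 1))).aestronglyMeasurable ?_
      filter_upwards [hbdd (i + 1)] with ω hω
      simp only [hG, Function.comp_apply]
      rw [Real.norm_eq_abs, abs_of_pos (Real.exp_pos _)]
      exact Real.exp_le_exp.2 (mul_le_mul_of_nonneg_left ((le_abs_self _).trans hω) hs)
    have hfeq : f (i + 1) = f i * G := by
      funext ω
      have h1 : (1:ℕ) ≤ i + 1 := Nat.succ_le_succ (Nat.zero_le i)
      simp only [hf, hG, Pi.mul_apply, Function.comp_apply]
      rw [Finset.sum_Icc_succ_top h1, mul_add, Real.exp_add]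
    have hcond_mul : (ℙ : Measure Ω)[f (i + 1)|ℱ i] =ᵐ[ℙ] f i * (ℙ : Measure Ω)[G|ℱ i] := by
      rw [hfeq]
      exact condExp_stronglyMeasurable_mul_of_bound (ℱ.le i) (hadp i) hG_int
        (Real.exp (s * (i * M))) (hfbdd i)
    have hGsm : StronglyMeasurable[MeasurableSpace.comap (X (i + 1)) inferInstance] G :=
      ((Real.measurable_exp.comp (measurable_id.const_mul s)).comp
        (measurable_iff_comap_le.2 le_rfl)).stronglyMeasurable
    have hindG : Indep (MeasurableSpace.comap (X (i + 1)) inferInstance) (ℱ i) ℙ :=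
      hindep.indep_comap_natural_of_lt hXsm (Nat.lt_succ_self i)
    have hcond_indep : (ℙ : Measure Ω)[G|ℱ i] =ᵐ[ℙ] fun _ => ∫ ω, G ω :=
      condExp_indep_eq (hmeas (i + 1)).comap_le (ℱ.le i) hGsm hindG
    have hEG : 1 ≤ ∫ ω, G ω := by
      have hle : ∫ ω, (1 + s * X (i + 1) ω) ≤ ∫ ω, G ω := by
        refine integral_mono ((integrable_const 1).add ((hXint (i + 1)).const_mul s)) hG_int ?_
        intro ω
        simpa [hG, add_comm] using Real.add_one_le_exp (s * X (i + 1) ω)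
      rwa [integral_add (integrable_const 1) ((hXint (i + 1)).const_mul s), integral_const,
        integral_const_mul, hmean (i + 1), mul_zero, add_zero,
        probReal_univ, smul_eq_mul, mul_one] at hle
    filter_upwards [hcond_mul, hcond_indep] with ω h1 h2
    rw [h1, Pi.mul_apply, h2]
    have hfnn : 0 ≤ f i ω := (Real.exp_pos _).le
    calc f i ω = f i ω * 1 := (mul_one _).symm
    _ ≤ f i ω * ∫ ω', G ω' := by gcongr
  -- Doob's maximal inequality
  set ε : ℝ≥0 := Real.toNNReal (Real.exp (s * t)) with hε
  have hεcoe : (ε : ℝ) = Real.exp (s * t) := Real.coe_toNNReal _ (Real.exp_pos _).le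
  have hDoob := maximal_ineq hsub (fun i ω => (Real.exp_pos _).le) (ε := ε) n
  set A := {ω | (ε : ℝ) ≤ (Finset.range (n + 1)).sup' Finset.nonempty_range_add_one
      fun k => f k ω} with hA
  have hsubset : {ω | ∃ i ∈ Icc 1 n, t ≤ ∑ k ∈ Icc 1 i, X k ω} ⊆ A := by
    rintro ω ⟨i, hi, hti⟩
    have hin : i ∈ Finset.range (n + 1) :=
      Finset.mem_range.2 (Nat.lt_succ_of_le (Finset.mem_Icc.1 hi).2)
    refine le_trans ?_ (Finset.le_sup' (fun k => f k ω) hin)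
    rw [hεcoe]
    exact Real.exp_le_exp.2 (mul_le_mul_of_nonneg_left hti hs)
  have hintset : ∫ ω in A, f n ω ≤ ∫ ω, f n ω :=
    setIntegral_le_integral (hf_int n) (Filter.Eventually.of_forall fun ω => (Real.exp_pos _).le)
  have hstep1 : (ε : ℝ≥0∞) * ℙ A ≤ ENNReal.ofReal (∫ ω, f n ω) := by
    refine le_trans ?_ (ENNReal.ofReal_le_ofReal hintset)
    simpa [hA, smul_eq_mul] using hDoob
  have hεinv : ENNReal.ofReal (Real.exp (-(s * t))) * (ε : ℝ≥0∞) = 1 := by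
    have : (ε : ℝ≥0∞) = ENNReal.ofReal (Real.exp (s * t)) := rfl
    rw [this, ← ENNReal.ofReal_mul (Real.exp_pos _).le, ← Real.exp_add]
    simp
  have hPA : ℙ A ≤ ENNReal.ofReal (Real.exp (-(s * t)) * ∫ ω, f n ω) := by
    calc ℙ A = ENNReal.ofReal (Real.exp (-(s * t))) * ((ε : ℝ≥0∞) * ℙ A) := by
          rw [← mul_assoc, hεinv, one_mul]
    _ ≤ ENNReal.ofReal (Real.exp (-(s * t))) * ENNReal.ofReal (∫ ω, f n ω) := by
        exact mul_le_mul_right hstep1 _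
    _ = ENNReal.ofReal (Real.exp (-(s * t)) * ∫ ω, f n ω) :=
        (ENNReal.ofReal_mul (Real.exp_pos _).le).symm
  -- bound the mgf of the full sum
  set G : ℕ → Ω → ℝ := fun k => (fun x => Real.exp (s * x)) ∘ X k with hGdef
  have hGindep : iIndepFun G ℙ :=
    hindep.comp _ fun k => Real.measurable_exp.comp (measurable_id.const_mul s)
  have hGmeas : ∀ k, Measurable (G k) := fun k =>
    (Real.measurable_exp.comp (measurable_id.const_mul s)).comp (hmeas k)
  have hGint : ∀ k, Integrable (G k) ℙ := by
    intro k
    refine Integrable.mono' (integrable_const (Real.exp (s * M)))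
      (hGmeas k).aestronglyMeasurable ?_
    filter_upwards [hbdd k] with ω hω
    simp only [hGdef, Function.comp_apply]
    rw [Real.norm_eq_abs, abs_of_pos (Real.exp_pos _)]
    exact Real.exp_le_exp.2 (mul_le_mul_of_nonneg_left ((le_abs_self _).trans hω) hs)
  have hfn_eq : ∀ ω, f n ω = ∏ k ∈ Icc 1 n, G k ω := by
    intro ω
    rw [hf]
    simp only [Finset.mul_sum]
    rw [Real.exp_sum]
    rfl
  have hprod := aux_prod_integral G hGmeas hGindep hGint (Icc 1 n)
  have hmgf : ∫ ω, f n ω ≤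
      Real.exp ((∑ k ∈ Icc 1 n, variance (X k) ℙ) * s ^ 2 / (2 * (1 - s * M / 3))) := by
    have h1 : ∫ ω, f n ω = ∏ k ∈ Icc 1 n, ∫ ω, G k ω := by
      rw [show (fun ω => f n ω) = fun ω => ∏ k ∈ Icc 1 n, G k ω from funext hfn_eq] at *
      simpa [hfn_eq] using hprod.2
    rw [h1]
    calc ∏ k ∈ Icc 1 n, ∫ ω, G k ω
        ≤ ∏ k ∈ Icc 1 n, Real.exp (variance (X k) ℙ * s ^ 2 / (2 * (1 - s * M / 3))) := by
          refine Finset.prod_le_prod (fun k _ => ?_) (fun k _ => ?_)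
          · exact integral_nonneg fun ω => (Real.exp_pos _).le
          · exact aux_mgf (hmeas k) (hmean k) (hbdd k) hs hsM
    _ = Real.exp (∑ k ∈ Icc 1 n, variance (X k) ℙ * s ^ 2 / (2 * (1 - s * M / 3))) :=
        (Real.exp_sum _ _).symm
    _ = Real.exp ((∑ k ∈ Icc 1 n, variance (X k) ℙ) * s ^ 2 / (2 * (1 - s * M / 3))) := by
        rw [← Finset.sum_div, ← Finset.sum_mul]
  refine le_trans (measure_mono hsubset) (hPA.trans ?_)
  rw [Real.exp_add]
  refine ENNReal.ofReal_le_ofReal ?_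
  exact mul_le_mul_of_nonneg_left hmgf (Real.exp_pos _).le

/-- Generalized Bernstein (maximal) inequality: for independent random variables
`Y 1, ..., Y n` with `|Y k - E[Y k]| ≤ M` a.s., the maximum of the centered partial sums
`Z i = Y 1 + ... + Y i` satisfies a Bernstein-type exponential tail bound. -/
theorem stmt0 {Ω : Type*} [MeasureSpace Ω] [IsProbabilityMeasure (ℙ : Measure Ω)]
    (n : ℕ) (hn : 1 ≤ n) (Y : ℕ → Ω → ℝ) (M : ℝ) (hM : 0 < M)
    (hmeas : ∀ k, Measurable (Y k))
    (hint : ∀ k, Integrable (Y k))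
    (hindep : iIndepFun Y ℙ)
    (hbdd : ∀ k ∈ Icc 1 n, ∀ᵐ ω, |Y k ω - ∫ ω', Y k ω'| ≤ M)
    (Z : ℕ → Ω → ℝ) (hZ : ∀ i ω, Z i ω = ∑ k ∈ Icc 1 i, Y k ω)
    (t : ℝ) (ht : 0 < t) :
    (ℙ {ω | ∃ i ∈ Icc 1 n, t ≤ |Z i ω - ∫ ω', Z i ω'|}).toReal ≤
      2 * Real.exp (- t ^ 2 / (2 * variance (Z n) ℙ + (2 / 3) * M * t)) := by
  classical
  set c : ℕ → ℝ := fun k => ∫ ω', Y k ω' with hc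
  set fphi : ℕ → ℝ → ℝ := fun k => if k ∈ Icc 1 n then (fun x => x - c k) else 0 with hfphi
  set X : ℕ → Ω → ℝ := fun k => fphi k ∘ Y k with hX
  have hfphimeas : ∀ k, Measurable (fphi k) := by
    intro k
    by_cases hk : k ∈ Icc 1 n
    · simp only [hfphi, hk, if_true]
      exact measurable_id.sub_const _
    · simp only [hfphi, hk, if_false]
      exact measurable_const
  have hXmeas : ∀ k, Measurable (X k) := fun k => (hfphimeas k).comp (hmeas k)
  have hXindep : iIndepFun X ℙ := hindep.comp fphi hfphimeas
  have hXin : ∀ k ∈ Icc 1 n, X k = fun ω => Y k ω - c k := by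
    intro k hk; funext ω
    simp only [hX, hfphi, Function.comp_apply]
    rw [if_pos hk]
  have hXout : ∀ k, k ∉ Icc 1 n → X k = fun _ => 0 := by
    intro k hk; funext ω
    simp only [hX, hfphi, Function.comp_apply]
    rw [if_neg hk]
    rfl
  have hXmean : ∀ k, ∫ ω, X k ω = 0 := by
    intro k
    by_cases hk : k ∈ Icc 1 n
    · rw [hXin k hk, integral_sub (hint k) (integrable_const _), integral_const]
      simp [hc]
    · rw [hXout k hk]; simp
  have hXbdd : ∀ k, ∀ᵐ ω, |X k ω| ≤ M := by
    intro k
    by_cases hk : k ∈ Icc 1 n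
    · rw [hXin k hk]; exact hbdd k hk
    · rw [hXout k hk]
      filter_upwards with ω using by simpa using hM.le
  have hXint : ∀ k, Integrable (X k) ℙ := by
    intro k
    refine Integrable.mono' (integrable_const M) (hXmeas k).aestronglyMeasurable ?_
    filter_upwards [hXbdd k] with ω hω using by rwa [Real.norm_eq_abs]
  have hX2 : ∀ k, MemLp (X k) 2 ℙ := by
    intro k
    refine MemLp.of_bound (hXmeas k).aestronglyMeasurable M ?_
    filter_upwards [hXbdd k] with ω hω using by rwa [Real.norm_eq_abs]
  -- the variance of `Z n` is the sum of the variances of the `X k`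
  have hY2 : ∀ k ∈ Icc 1 n, MemLp (Y k) 2 ℙ := by
    intro k hk
    refine MemLp.of_bound (hmeas k).aestronglyMeasurable (M + |c k|) ?_
    filter_upwards [hbdd k hk] with ω hω
    rw [Real.norm_eq_abs]
    calc |Y k ω| = |(Y k ω - c k) + c k| := by ring_nf
    _ ≤ |Y k ω - c k| + |c k| := abs_add_le _ _
    _ ≤ M + |c k| := by gcongr
  have hvarXY : ∀ k ∈ Icc 1 n, variance (Y k) ℙ = variance (X k) ℙ := by
    intro k hk
    have h1 : variance (Y k) ℙ = ∫ ω, (Y k ω - c k) ^ 2 := by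
      rw [variance_eq_integral (hY2 k hk).aemeasurable]
    have h2 : variance (X k) ℙ = ∫ ω, (X k ω) ^ 2 := by
      have := variance_eq_sub (hX2 k)
      simpa [hXmean k, Pi.pow_apply] using this
    rw [h1, h2, hXin k hk]
  have hVsum : variance (Z n) ℙ = ∑ k ∈ Icc 1 n, variance (X k) ℙ := by
    have hZn : Z n = ∑ k ∈ Icc 1 n, Y k := by
      funext ω; rw [hZ]; exact (Finset.sum_apply _ _ _).symm
    rw [hZn, IndepFun.variance_sum hY2
      (fun i hi j hj hij => hindep.indepFun hij)]
    exact Finset.sum_congr rfl hvarXY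
  set V : ℝ := ∑ k ∈ Icc 1 n, variance (X k) ℙ with hV
  have hV0 : 0 ≤ V := Finset.sum_nonneg fun k _ => variance_nonneg _ _
  clear_value V
  -- the negated family
  set X' : ℕ → Ω → ℝ := fun k => (fun x => -x) ∘ X k with hX'
  have hX'meas : ∀ k, Measurable (X' k) := fun k => measurable_neg.comp (hXmeas k)
  have hX'indep : iIndepFun X' ℙ := hXindep.comp _ fun _ => measurable_neg
  have hX'mean : ∀ k, ∫ ω, X' k ω = 0 := by
    intro k
    simp only [hX', Function.comp_apply]
    rw [integral_neg, hXmean k, neg_zero]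
  have hX'bdd : ∀ k, ∀ᵐ ω, |X' k ω| ≤ M := by
    intro k
    filter_upwards [hXbdd k] with ω hω
    simpa [hX'] using hω
  have hvarX' : ∀ k, variance (X' k) ℙ = variance (X k) ℙ := by
    intro k
    have : X' k = (-1 : ℝ) • X k := by funext ω; simp [hX']
    rw [this, variance_smul]
    ring
  have hV' : ∑ k ∈ Icc 1 n, variance (X' k) ℙ = V :=
    (Finset.sum_congr rfl fun k _ => hvarX' k).trans hV.symm
  -- identification of the centered partial sums
  have hZc : ∀ i ∈ Icc 1 n, ∀ ω, Z i ω - ∫ ω', Z i ω' = ∑ k ∈ Icc 1 i, X k ω := by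
    intro i hi ω
    have hsubI : Icc 1 i ⊆ Icc 1 n := Finset.Icc_subset_Icc le_rfl (Finset.mem_Icc.1 hi).2
    have hZint : ∫ ω', Z i ω' = ∑ k ∈ Icc 1 i, c k := by
      have : (fun ω' => Z i ω') = fun ω' => ∑ k ∈ Icc 1 i, Y k ω' := by
        funext ω'; exact hZ i ω'
      rw [this, integral_finset_sum _ fun k _ => hint k]
    rw [hZ, hZint, ← Finset.sum_sub_distrib]
    refine Finset.sum_congr rfl fun k hk => ?_
    rw [hXin k (hsubI hk)]
  -- split the event
  have hsubev : {ω | ∃ i ∈ Icc 1 n, t ≤ |Z i ω - ∫ ω', Z i ω'|} ⊆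
      {ω | ∃ i ∈ Icc 1 n, t ≤ ∑ k ∈ Icc 1 i, X k ω} ∪
      {ω | ∃ i ∈ Icc 1 n, t ≤ ∑ k ∈ Icc 1 i, X' k ω} := by
    rintro ω ⟨i, hi, hti⟩
    rw [hZc i hi ω] at hti
    rcases abs_cases (∑ k ∈ Icc 1 i, X k ω) with ⟨heq, _⟩ | ⟨heq, _⟩
    · exact Or.inl ⟨i, hi, by rwa [heq] at hti⟩
    · refine Or.inr ⟨i, hi, ?_⟩
      rw [heq] at hti
      simpa [hX', Finset.sum_neg_distrib] using hti
  -- choose the optimal `s` and conclude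
  obtain ⟨s, hs0, hsM, hexp⟩ : ∃ s : ℝ, 0 ≤ s ∧ s * M < 3 ∧
      -(s * t) + V * s ^ 2 / (2 * (1 - s * M / 3)) =
        -t ^ 2 / (2 * V + (2 / 3) * M * t) := by
    rcases eq_or_lt_of_le hV0 with hV0' | hV0'
    · refine ⟨3 / (2 * M), by positivity, ?_, ?_⟩
      · rw [div_mul_eq_mul_div, mul_comm]
        rw [div_lt_iff₀ (by positivity)]
        nlinarith
      · rw [← hV0']
        have hMne : M ≠ 0 := hM.ne'
        have htne : t ≠ 0 := ht.ne'
        field_simp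
        ring
    · have hd : 0 < V + M * t / 3 := by
        have : 0 < M * t / 3 := by positivity
        linarith
      refine ⟨t / (V + M * t / 3), le_of_lt (div_pos ht hd), ?_, ?_⟩
      · rw [div_mul_eq_mul_div, div_lt_iff₀ hd]
        nlinarith
      · have h1 : 1 - t / (V + M * t / 3) * M / 3 = V / (V + M * t / 3) := by
          field_simp
          ring
        rw [h1]
        have hVne : V ≠ 0 := ne_of_gt hV0'
        have hdne : V + M * t / 3 ≠ 0 := ne_of_gt hd
        have hd2 : (2 * V + 2 / 3 * M * t) ≠ 0 := by nlinarith
        field_simp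
        ring
  have h1 := aux_onesided n X M s t hM hs0 hsM hXmeas hXindep hXmean hXbdd ht
  have h2 := aux_onesided n X' M s t hM hs0 hsM hX'meas hX'indep hX'mean hX'bdd ht
  rw [hV'] at h2
  rw [← hV] at h1
  rw [hexp] at h1 h2
  set e : ℝ := Real.exp (-t ^ 2 / (2 * V + 2 / 3 * M * t)) with he
  have hmain : ℙ {ω | ∃ i ∈ Icc 1 n, t ≤ |Z i ω - ∫ ω', Z i ω'|} ≤
      ENNReal.ofReal (2 * e) := by
    calc ℙ {ω | ∃ i ∈ Icc 1 n, t ≤ |Z i ω - ∫ ω', Z i ω'|}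
        ≤ ℙ ({ω | ∃ i ∈ Icc 1 n, t ≤ ∑ k ∈ Icc 1 i, X k ω} ∪
            {ω | ∃ i ∈ Icc 1 n, t ≤ ∑ k ∈ Icc 1 i, X' k ω}) := measure_mono hsubev
    _ ≤ ℙ {ω | ∃ i ∈ Icc 1 n, t ≤ ∑ k ∈ Icc 1 i, X k ω} +
        ℙ {ω | ∃ i ∈ Icc 1 n, t ≤ ∑ k ∈ Icc 1 i, X' k ω} := measure_union_le _ _
    _ ≤ ENNReal.ofReal e + ENNReal.ofReal e := add_le_add h1 h2
    _ = ENNReal.ofReal (2 * e) := by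
        rw [← ENNReal.ofReal_add (Real.exp_pos _).le (Real.exp_pos _).le]
        congr 1
        ring
  have hfinal : (ℙ {ω | ∃ i ∈ Icc 1 n, t ≤ |Z i ω - ∫ ω', Z i ω'|}).toReal ≤ 2 * e := by
    calc (ℙ {ω | ∃ i ∈ Icc 1 n, t ≤ |Z i ω - ∫ ω', Z i ω'|}).toReal
        ≤ (ENNReal.ofReal (2 * e)).toReal := ENNReal.toReal_mono ENNReal.ofReal_ne_top hmain
    _ = 2 * e := ENNReal.toReal_ofReal (by positivity)
  rw [hVsum]
  exact hfinal
end

section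
/- Let (X_n) be a sequence of nonnegative independent random variables, (t_n) a sequence of positive reals, W_{k,n} = X_k·1_{X_k ≤ t_n}, and Z_n = Σ_{k=1}^n W_{k,n} with d_n = E[Z_n]. If there exists C₀ > 0 such that Σ_n exp(-C d_n² / (n t_n²)) < ∞ for all 0 < C < C₀, then Z_n / d_n → 1 almost surely. -/
open MeasureTheory ProbabilityTheory Finset Filter

lemma my_int_bdd {Ω : Type*} [MeasureSpace Ω] [IsFiniteMeasure (ℙ : Measure Ω)]
    {f : Ω → ℝ} (hf : Measurable f) {C : ℝ} (h : ∀ ω, ‖f ω‖ ≤ C) :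
    Integrable f := ⟨hf.aestronglyMeasurable, HasFiniteIntegral.of_bounded (ae_of_all _ h)⟩

lemma my_mgf_bound {Ω : Type*} [MeasureSpace Ω] [IsProbabilityMeasure (ℙ : Measure Ω)]
    {Y : Ω → ℝ} (hY : Measurable Y) {a : ℝ} (ha : 0 < a) (hb : ∀ ω, |Y ω| ≤ a)
    (h0 : ∫ ω, Y ω = 0) (s : ℝ) :
    mgf Y ℙ s ≤ Real.exp (s ^ 2 * a ^ 2 / 2) := by
  have hint : Integrable Y := my_int_bdd hY (fun ω => by simpa using hb ω)
  have hexp : Integrable (fun ω => Real.exp (s * Y ω)) := by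
    refine my_int_bdd (hY.const_mul s).exp (C := Real.exp (|s| * a)) (fun ω => ?_)
    rw [Real.norm_eq_abs, abs_of_pos (Real.exp_pos _), Real.exp_le_exp]
    calc s * Y ω ≤ |s * Y ω| := le_abs_self _
      _ = |s| * |Y ω| := abs_mul _ _
      _ ≤ |s| * a := by have := hb ω; have := abs_nonneg s; nlinarith
  have hpt : ∀ ω, Real.exp (s * Y ω) ≤
      Real.cosh (s * a) + Y ω * (Real.sinh (s * a) / a) := by
    intro ω
    obtain ⟨h1, h2⟩ := abs_le.1 (hb ω)
    set y := Y ω with hy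
    have hp : (0:ℝ) ≤ (a - y) / (2 * a) := by
      apply div_nonneg <;> linarith
    have hq : (0:ℝ) ≤ (a + y) / (2 * a) := by
      apply div_nonneg <;> linarith
    have hpq : (a - y) / (2 * a) + (a + y) / (2 * a) = 1 := by
      field_simp; ring
    have := convexOn_exp.2 (Set.mem_univ (-(s * a))) (Set.mem_univ (s * a)) hp hq hpq
    simp only [smul_eq_mul] at this
    have harg : (a - y) / (2 * a) * -(s * a) + (a + y) / (2 * a) * (s * a) = s * y := by
      field_simp; ring
    rw [harg] at this
    refine this.trans (le_of_eq ?_)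
    rw [Real.cosh_eq, Real.sinh_eq]
    field_simp
    ring
  have hrhs : Integrable (fun ω => Real.cosh (s * a) + Y ω * (Real.sinh (s * a) / a)) :=
    (integrable_const _).add (hint.mul_const _)
  calc mgf Y ℙ s ≤ ∫ ω, (Real.cosh (s * a) + Y ω * (Real.sinh (s * a) / a)) :=
        integral_mono hexp hrhs hpt
    _ = Real.cosh (s * a) := by
        rw [integral_add (integrable_const _) (hint.mul_const _), integral_const,
          integral_mul_const, h0]
        simp
    _ ≤ Real.exp ((s * a) ^ 2 / 2) := Real.cosh_le_exp_half_sq _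
    _ = Real.exp (s ^ 2 * a ^ 2 / 2) := by rw [mul_pow]

lemma my_tail {Ω : Type*} [MeasureSpace Ω] [IsProbabilityMeasure (ℙ : Measure Ω)]
    {Y : ℕ → Ω → ℝ} (hmeas : ∀ k, Measurable (Y k))
    (hindep : iIndepFun Y ℙ)
    {a : ℝ} (ha : 0 < a) (hb : ∀ k ω, |Y k ω| ≤ a) (h0 : ∀ k, ∫ ω, Y k ω = 0)
    {n : ℕ} (hn : 1 ≤ n) {ε : ℝ} (hε : 0 < ε) :
    (ℙ {ω | ε ≤ |∑ k ∈ Icc 1 n, Y k ω|}).toReal ≤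
      2 * Real.exp (-ε ^ 2 / (2 * n * a ^ 2)) := by
  have hnpos : (0:ℝ) < n := by exact_mod_cast hn
  have hexpint : ∀ (s : ℝ) (k : ℕ), Integrable (fun ω => Real.exp (s * Y k ω)) := by
    intro s k
    refine my_int_bdd ((hmeas k).const_mul s).exp (C := Real.exp (|s| * a)) (fun ω => ?_)
    rw [Real.norm_eq_abs, abs_of_pos (Real.exp_pos _), Real.exp_le_exp]
    calc s * Y k ω ≤ |s * Y k ω| := le_abs_self _
      _ = |s| * |Y k ω| := abs_mul _ _
      _ ≤ |s| * a := by have := hb k ω; have := abs_nonneg s; nlinarith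
  have hmgf : ∀ s : ℝ, mgf (∑ k ∈ Icc 1 n, Y k) ℙ s ≤
      Real.exp (n * (s ^ 2 * a ^ 2 / 2)) := by
    intro s
    rw [hindep.mgf_sum hmeas]
    calc ∏ k ∈ Icc 1 n, mgf (Y k) ℙ s ≤
        ∏ _k ∈ Icc 1 n, Real.exp (s ^ 2 * a ^ 2 / 2) :=
          Finset.prod_le_prod (fun k _ => mgf_nonneg)
            (fun k _ => my_mgf_bound (hmeas k) ha (hb k) (h0 k) s)
      _ = Real.exp (s ^ 2 * a ^ 2 / 2) ^ n := by
          rw [Finset.prod_const, Nat.card_Icc]; norm_num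
      _ = Real.exp (n * (s ^ 2 * a ^ 2 / 2)) := by rw [Real.exp_nat_mul]
  set s : ℝ := ε / (n * a ^ 2) with hs
  have hspos : 0 < s := by positivity
  have hSint : ∀ u : ℝ, Integrable (fun ω => Real.exp (u * (∑ k ∈ Icc 1 n, Y k) ω)) :=
    fun u => hindep.integrable_exp_mul_sum hmeas (fun k _ => hexpint u k)
  have hexpval : -s * ε + n * (s ^ 2 * a ^ 2 / 2) = -ε ^ 2 / (2 * n * a ^ 2) := by
    rw [hs]; field_simp; ring
  have hup : (ℙ {ω | ε ≤ (∑ k ∈ Icc 1 n, Y k) ω}).toReal ≤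
      Real.exp (-ε ^ 2 / (2 * n * a ^ 2)) := by
    calc (ℙ {ω | ε ≤ (∑ k ∈ Icc 1 n, Y k) ω}).toReal ≤
        Real.exp (-s * ε) * mgf (∑ k ∈ Icc 1 n, Y k) ℙ s :=
          measure_ge_le_exp_mul_mgf ε hspos.le (hSint s)
      _ ≤ Real.exp (-s * ε) * Real.exp (n * (s ^ 2 * a ^ 2 / 2)) := by
          have := hmgf s; nlinarith [Real.exp_pos (-s * ε), mgf_nonneg (X := ∑ k ∈ Icc 1 n, Y k) (μ := (ℙ : Measure Ω)) (t := s)]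
      _ = Real.exp (-ε ^ 2 / (2 * n * a ^ 2)) := by rw [← Real.exp_add, hexpval]
  have hlow : (ℙ {ω | (∑ k ∈ Icc 1 n, Y k) ω ≤ -ε}).toReal ≤
      Real.exp (-ε ^ 2 / (2 * n * a ^ 2)) := by
    calc (ℙ {ω | (∑ k ∈ Icc 1 n, Y k) ω ≤ -ε}).toReal ≤
        Real.exp (-(-s) * -ε) * mgf (∑ k ∈ Icc 1 n, Y k) ℙ (-s) :=
          measure_le_le_exp_mul_mgf (-ε) (by linarith) (hSint (-s))
      _ ≤ Real.exp (-s * ε) * Real.exp (n * (s ^ 2 * a ^ 2 / 2)) := by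
          have := hmgf (-s)
          have h2 : (-s : ℝ) ^ 2 = s ^ 2 := by ring
          rw [h2] at this
          have h3 : -(-s) * -ε = -s * ε := by ring
          rw [h3]
          nlinarith [Real.exp_pos (-s * ε), mgf_nonneg (X := ∑ k ∈ Icc 1 n, Y k) (μ := (ℙ : Measure Ω)) (t := -s)]
      _ = Real.exp (-ε ^ 2 / (2 * n * a ^ 2)) := by rw [← Real.exp_add, hexpval]
  have hsub : {ω : Ω | ε ≤ |∑ k ∈ Icc 1 n, Y k ω|} ⊆
      {ω | ε ≤ (∑ k ∈ Icc 1 n, Y k) ω} ∪ {ω | (∑ k ∈ Icc 1 n, Y k) ω ≤ -ε} := by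
    intro ω hω
    simp only [Set.mem_setOf_eq, Set.mem_union, Finset.sum_apply] at *
    rcases le_abs.mp hω with h | h
    · exact Or.inl h
    · exact Or.inr (by linarith)
  have hfin : ℙ {ω : Ω | ε ≤ (∑ k ∈ Icc 1 n, Y k) ω} +
      ℙ {ω : Ω | (∑ k ∈ Icc 1 n, Y k) ω ≤ -ε} ≠ ⊤ :=
    ENNReal.add_ne_top.2 ⟨measure_ne_top _ _, measure_ne_top _ _⟩
  calc (ℙ {ω | ε ≤ |∑ k ∈ Icc 1 n, Y k ω|}).toReal ≤
      (ℙ {ω : Ω | ε ≤ (∑ k ∈ Icc 1 n, Y k) ω} +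
        ℙ {ω : Ω | (∑ k ∈ Icc 1 n, Y k) ω ≤ -ε}).toReal := by
        refine ENNReal.toReal_mono hfin ((measure_mono hsub).trans (measure_union_le _ _))
    _ = (ℙ {ω : Ω | ε ≤ (∑ k ∈ Icc 1 n, Y k) ω}).toReal +
        (ℙ {ω : Ω | (∑ k ∈ Icc 1 n, Y k) ω ≤ -ε}).toReal :=
        ENNReal.toReal_add (measure_ne_top _ _) (measure_ne_top _ _)
    _ ≤ 2 * Real.exp (-ε ^ 2 / (2 * n * a ^ 2)) := by linarith

/-- Strong law for truncated sums: if `Z n = Σ_{k=1}^n X k · 1_{X k ≤ t n}`, `d n = E[Z n]`,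
and `Σ_n exp(-C d_n² / (n t_n²)) < ∞` for all small `C > 0`, then `Z n / d n → 1` a.s. -/
theorem stmt1 {Ω : Type*} [MeasureSpace Ω] [IsProbabilityMeasure (ℙ : Measure Ω)]
    (X : ℕ → Ω → ℝ) (hmeas : ∀ k, Measurable (X k)) (hnonneg : ∀ k ω, 0 ≤ X k ω)
    (hindep : iIndepFun X ℙ)
    (t : ℕ → ℝ) (ht : ∀ n, 0 < t n)
    (Z : ℕ → Ω → ℝ)
    (hZ : ∀ n ω, Z n ω = ∑ k ∈ Icc 1 n, X k ω * Set.indicator {ω' | X k ω' ≤ t n} 1 ω)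
    (d : ℕ → ℝ) (hd : ∀ n, d n = ∫ ω, Z n ω)
    (hsum : ∃ C₀ > (0 : ℝ), ∀ C, 0 < C → C < C₀ →
      Summable (fun n : ℕ => Real.exp (- C * (d n) ^ 2 / (n * (t n) ^ 2)))) :
    ∀ᵐ ω, Tendsto (fun n => Z n ω / d n) atTop (nhds 1) := by

  classical
  obtain ⟨C₀, hC₀, hsum⟩ := hsum
  set g : ℕ → ℝ → ℝ := fun n x => x * Set.indicator (Set.Iic (t n)) 1 x with hgdef
  have hg_meas : ∀ n, Measurable (g n) :=
    fun n => measurable_id.mul (measurable_const.indicator measurableSet_Iic)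
  have hg0 : ∀ n x, 0 ≤ x → 0 ≤ g n x := by
    intro n x hx
    simp only [hgdef, Set.indicator_apply, Set.mem_Iic]
    split_ifs <;> simp [hx]
  have hgt : ∀ n x, 0 ≤ x → g n x ≤ t n := by
    intro n x hx
    simp only [hgdef, Set.indicator_apply, Set.mem_Iic]
    split_ifs with h <;> simp [h, (ht n).le]
  have hZg : ∀ n ω, Z n ω = ∑ k ∈ Icc 1 n, g n (X k ω) := by
    intro n ω
    rw [hZ n ω]
    refine Finset.sum_congr rfl (fun k _ => ?_)
    simp only [hgdef, Set.indicator_apply, Set.mem_Iic, Set.mem_setOf_eq, Pi.one_apply]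
  have hint : ∀ n k, Integrable (fun ω => g n (X k ω)) := by
    intro n k
    refine my_int_bdd ((hg_meas n).comp (hmeas k)) (C := t n) (fun ω => ?_)
    rw [Real.norm_eq_abs, abs_of_nonneg (hg0 n _ (hnonneg k ω))]
    exact hgt n _ (hnonneg k ω)
  set mm : ℕ → ℕ → ℝ := fun n k => ∫ ω, g n (X k ω) with hmmdef
  have hm0 : ∀ n k, 0 ≤ mm n k :=
    fun n k => integral_nonneg (fun ω => hg0 n _ (hnonneg k ω))
  have hmt : ∀ n k, mm n k ≤ t n := by
    intro n k
    calc mm n k ≤ ∫ _ω, t n := integral_mono (hint n k) (integrable_const _)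
          (fun ω => hgt n _ (hnonneg k ω))
      _ = t n := by simp
  have hdm : ∀ n, d n = ∑ k ∈ Icc 1 n, mm n k := by
    intro n
    rw [hd n]
    rw [integral_congr_ae (ae_of_all _ (hZg n))]
    exact integral_finset_sum _ (fun k _ => hint n k)
  have hd0 : ∀ n, 0 ≤ d n := by
    intro n
    rw [hdm n]
    exact Finset.sum_nonneg (fun k _ => hm0 n k)
  set Y : ℕ → ℕ → Ω → ℝ := fun n k ω => g n (X k ω) - mm n k with hYdef
  have hYmeas : ∀ n k, Measurable (Y n k) :=
    fun n k => ((hg_meas n).comp (hmeas k)).sub measurable_const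
  have hYindep : ∀ n, iIndepFun (Y n) ℙ := by
    intro n
    exact hindep.comp (fun k x => g n x - mm n k)
      (fun k => (hg_meas n).sub measurable_const)
  have hYbd : ∀ n k ω, |Y n k ω| ≤ t n := by
    intro n k ω
    have h1 := hg0 n _ (hnonneg k ω)
    have h2 := hgt n _ (hnonneg k ω)
    have h3 := hm0 n k
    have h4 := hmt n k
    rw [abs_le]
    constructor <;> simp only [hYdef] <;> linarith
  have hY0 : ∀ n k, ∫ ω, Y n k ω = 0 := by
    intro n k
    simp only [hYdef]
    rw [integral_sub (hint n k) (integrable_const _), integral_const]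
    simp [hmmdef]
  have hYS : ∀ n ω, ∑ k ∈ Icc 1 n, Y n k ω = Z n ω - d n := by
    intro n ω
    simp only [hYdef]
    rw [Finset.sum_sub_distrib, ← hZg n ω, ← hdm n]
  -- eventual positivity of d and n
  have hterm : Tendsto (fun n : ℕ => Real.exp (- (C₀/2) * (d n) ^ 2 / (n * (t n) ^ 2)))
      atTop (nhds 0) := (hsum (C₀/2) (by linarith) (by linarith)).tendsto_atTop_zero
  have hev : ∀ᶠ n in atTop, 1 ≤ n ∧ 0 < d n := by
    filter_upwards [hterm.eventually_lt_const (by norm_num : (0:ℝ) < 1)] with n hn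
    rw [Real.exp_lt_one_iff] at hn
    have hden : 0 < (n : ℝ) * (t n) ^ 2 := by
      by_contra h
      push_neg at h
      have hden0 : (n : ℝ) * (t n) ^ 2 = 0 := le_antisymm h (by positivity)
      rw [hden0, div_zero] at hn
      linarith
    have hnum : - (C₀/2) * (d n) ^ 2 < 0 := by
      by_contra h
      push_neg at h
      have : 0 ≤ - (C₀/2) * (d n) ^ 2 / ((n : ℝ) * (t n) ^ 2) := div_nonneg h hden.le
      linarith
    have hdn : d n ≠ 0 := by
      intro h
      rw [h] at hnum
      norm_num at hnum
    refine ⟨?_, lt_of_le_of_ne (hd0 n) (Ne.symm hdn)⟩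
    by_contra h
    push_neg at h
    interval_cases n
    · norm_num at hden
  -- key a.e. eventual estimate
  have key : ∀ M : ℕ, ∀ᵐ ω, ∀ᶠ n in atTop,
      |Z n ω - d n| < (1/((M:ℝ)+1)) * d n := by
    intro M
    set ε : ℝ := 1/((M:ℝ)+1) with hεdef
    have hε : 0 < ε := by positivity
    set C : ℝ := min (ε^2/2) (C₀/2) with hCdef
    have hC : 0 < C := lt_min (by positivity) (by linarith)
    have hClt : C < C₀ := lt_of_le_of_lt (min_le_right _ _) (by linarith)
    obtain ⟨N₀, hN₀⟩ := eventually_atTop.mp hev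
    set A : ℕ → Set Ω := fun n => {ω | ε * d n ≤ |Z n ω - d n|} with hAdef
    set b : ℕ → ℝ := fun n => 2 * Real.exp (- C * (d n) ^ 2 / (n * (t n) ^ 2)) with hbdef
    have hbd : ∀ i : ℕ, ℙ (A (i + N₀)) ≤ ENNReal.ofReal (b (i + N₀)) := by
      intro i
      set n := i + N₀ with hndef
      obtain ⟨hn1, hdpos⟩ := hN₀ n (Nat.le_add_left _ _)
      have hεd : 0 < ε * d n := mul_pos hε hdpos
      have hAeq : A n = {ω | ε * d n ≤ |∑ k ∈ Icc 1 n, Y n k ω|} := by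
        ext ω
        simp only [hAdef, Set.mem_setOf_eq, hYS n ω]
      have r1 : (ℙ (A n)).toReal ≤ 2 * Real.exp (-(ε * d n) ^ 2 / (2 * n * (t n) ^ 2)) := by
        rw [hAeq]
        exact my_tail (hYmeas n) (hYindep n) (ht n) (hYbd n) (hY0 n) hn1 hεd
      have hn0 : ((n : ℝ)) ≠ 0 := by
        have : (0:ℝ) < n := by exact_mod_cast hn1
        linarith
      have ht0 : t n ≠ 0 := (ht n).ne'
      have harith : -(ε * d n) ^ 2 / (2 * n * (t n) ^ 2) ≤ - C * (d n) ^ 2 / (n * (t n) ^ 2) := by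
        have hq : 0 ≤ (d n) ^ 2 / ((n : ℝ) * (t n) ^ 2) := by positivity
        have e1 : -(ε * d n) ^ 2 / (2 * (n:ℝ) * (t n) ^ 2) =
            -(ε^2/2 * ((d n) ^ 2 / ((n:ℝ) * (t n) ^ 2))) := by
          field_simp
        have e2 : - C * (d n) ^ 2 / ((n:ℝ) * (t n) ^ 2) =
            -(C * ((d n) ^ 2 / ((n:ℝ) * (t n) ^ 2))) := by
          field_simp
        rw [e1, e2, neg_le_neg_iff]
        exact mul_le_mul_of_nonneg_right (min_le_left _ _) hq
      have r2 : (ℙ (A n)).toReal ≤ b n := by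
        refine r1.trans ?_
        simp only [hbdef]
        have := Real.exp_le_exp.2 harith
        linarith
      calc ℙ (A n) = ENNReal.ofReal ((ℙ (A n)).toReal) :=
            (ENNReal.ofReal_toReal (measure_ne_top _ _)).symm
        _ ≤ ENNReal.ofReal (b n) := ENNReal.ofReal_le_ofReal r2
    have hsum2 : Summable (fun i => b (i + N₀)) :=
      ((summable_nat_add_iff N₀).2 ((hsum C hC hClt).mul_left 2))
    have htsum : (∑' i, ℙ (A (i + N₀))) ≠ ⊤ := by
      refine ne_top_of_le_ne_top ?_ (ENNReal.tsum_le_tsum hbd)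
      rw [← ENNReal.ofReal_tsum_of_nonneg (fun i => by positivity) hsum2]
      exact ENNReal.ofReal_ne_top
    filter_upwards [ae_eventually_notMem htsum] with ω hω
    obtain ⟨i₀, hi₀⟩ := eventually_atTop.mp hω
    refine eventually_atTop.2 ⟨i₀ + N₀, fun n hn => ?_⟩
    have h2 := hi₀ (n - N₀) (by omega)
    rw [Nat.sub_add_cancel (by omega)] at h2
    simp only [hAdef, Set.mem_setOf_eq, not_le] at h2
    exact h2
  filter_upwards [ae_all_iff.2 key] with ω hω
  rw [Metric.tendsto_atTop]
  intro δ hδ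
  obtain ⟨M, hM⟩ := exists_nat_one_div_lt hδ
  obtain ⟨N, hN⟩ := eventually_atTop.mp ((hω M).and hev)
  refine ⟨N, fun n hn => ?_⟩
  obtain ⟨h1, -, hdpos⟩ := hN n hn
  rw [Real.dist_eq]
  have hdd : d n ≠ 0 := hdpos.ne'
  have heq : |Z n ω / d n - 1| = |Z n ω - d n| / d n := by
    have h5 : Z n ω / d n - 1 = (Z n ω - d n) / d n := by field_simp
    rw [h5, abs_div, abs_of_pos hdpos]
  rw [heq, div_lt_iff₀ hdpos]
  calc |Z n ω - d n| < (1/((M:ℝ)+1)) * d n := h1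
    _ ≤ δ * d n := by
      apply mul_le_mul_of_nonneg_right hM.le hdpos.le
end

section
/- Let (X_n) be nonnegative independent random variables, (t_n) positive reals, a_{k,n} = P(X_k > t_n), A_n = Σ_{k=1}^n a_{k,n}. If there exists c₀ > 0 with Σ_n exp(-c A_n) < ∞ for all 0 < c < c₀, then for every sufficiently small ε > 0, P(|Σ_{k=1}^n 1_{X_k > t_n} - A_n| ≥ ε A_n infinitely often) = 0. -/
open MeasureTheory ProbabilityTheory Finset Filter

lemma exp_le_quad {x : ℝ} (hx : |x| ≤ 1) : Real.exp x ≤ 1 + x + (3/4) * x ^ 2 := by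
  have h := Real.exp_bound hx (n := 2) (by norm_num)
  have h2 : |Real.exp x - (1 + x)| ≤ |x| ^ 2 * (3 / (2 * 2)) := by
    simpa [Finset.sum_range_succ, Nat.factorial] using h
  have h3 : Real.exp x - (1 + x) ≤ |x| ^ 2 * (3 / (2 * 2)) := (abs_le.mp h2).2
  have h4 : |x| ^ 2 = x ^ 2 := sq_abs x
  nlinarith

/-- If `Σ_n exp(-c A_n) < ∞` for all small `c > 0`, where `A n = Σ_{k=1}^n P(X k > t n)`,
then for every sufficiently small `ε > 0` the event
`|Σ_{k=1}^n 1_{X k > t n} - A n| ≥ ε A n` occurs only finitely often, a.s. -/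
theorem stmt3 {Ω : Type*} [MeasureSpace Ω] [IsProbabilityMeasure (ℙ : Measure Ω)]
    (X : ℕ → Ω → ℝ) (hmeas : ∀ k, Measurable (X k)) (hnonneg : ∀ k ω, 0 ≤ X k ω)
    (hindep : iIndepFun X ℙ)
    (t : ℕ → ℝ) (ht : ∀ n, 0 < t n)
    (A : ℕ → ℝ) (hA : ∀ n, A n = ∑ k ∈ Icc 1 n, (ℙ {ω | t n < X k ω}).toReal)
    (hsum : ∃ c₀ > (0 : ℝ), ∀ c, 0 < c → c < c₀ →
      Summable (fun n : ℕ => Real.exp (- c * A n))) :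
    ∃ ε₁ > (0 : ℝ), ∀ ε, 0 < ε → ε < ε₁ →
      ℙ (Filter.limsup
        (fun n : ℕ =>
          {ω | ε * A n ≤ |(∑ k ∈ Icc 1 n, if t n < X k ω then (1 : ℝ) else 0) - A n|})
        atTop) = 0 := by
  obtain ⟨c₀, hc₀, hs⟩ := hsum
  refine ⟨min 2 (2 * Real.sqrt c₀), by positivity, ?_⟩
  intro ε hε hε1
  rw [lt_min_iff] at hε1
  obtain ⟨hε2, hεs⟩ := hε1
  set c : ℝ := ε ^ 2 / 4 with hc_def
  have hc : 0 < c := by positivity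
  have hcc₀ : c < c₀ := by
    have h1 : ε < 2 * Real.sqrt c₀ := hεs
    have h2 : (0:ℝ) ≤ Real.sqrt c₀ := Real.sqrt_nonneg _
    have h3 : Real.sqrt c₀ ^ 2 = c₀ := Real.sq_sqrt hc₀.le
    nlinarith
  -- the key pointwise bound
  have key : ∀ n : ℕ, (ℙ {ω | ε * A n ≤
      |(∑ k ∈ Icc 1 n, if t n < X k ω then (1 : ℝ) else 0) - A n|}).toReal
      ≤ 2 * Real.exp (- c * A n) := by
    intro n
    set Y : ℕ → Ω → ℝ := fun k ω => if t n < X k ω then (1 : ℝ) else 0 with hY_def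
    have hSmeas : ∀ k, MeasurableSet {ω | t n < X k ω} := fun k =>
      measurableSet_lt measurable_const (hmeas k)
    have hYmeas : ∀ k, Measurable (Y k) := fun k =>
      Measurable.ite (hSmeas k) measurable_const measurable_const
    have hindepY : iIndepFun Y ℙ := by
      have : Y = fun k => (fun x => if t n < x then (1:ℝ) else 0) ∘ X k := by
        funext k ω; simp [hY_def]
      rw [this]
      exact hindep.comp _ (fun k =>
        Measurable.ite measurableSet_Ioi measurable_const measurable_const)
    set p : ℕ → ℝ := fun k => (ℙ {ω | t n < X k ω}).toReal with hp_def
    have hp0 : ∀ k, 0 ≤ p k := fun k => ENNReal.toReal_nonneg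
    have hA_nonneg : 0 ≤ A n := by
      rw [hA n]; exact Finset.sum_nonneg fun k _ => ENNReal.toReal_nonneg
    -- mgf of each indicator
    have hmgfY : ∀ s k, mgf (Y k) ℙ s = 1 + (Real.exp s - 1) * p k := by
      intro s k
      have heq : (fun ω => Real.exp (s * Y k ω)) =
          fun ω => Set.indicator {ω | t n < X k ω} (fun _ => Real.exp s - 1) ω + 1 := by
        funext ω
        by_cases h : t n < X k ω <;>
          simp [hY_def, h, Set.indicator, Real.exp_zero]
      rw [mgf, heq, integral_add (((integrable_const _).indicator (hSmeas k)))
          (integrable_const _), integral_indicator_const _ (hSmeas k), integral_const]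
      simp only [smul_eq_mul, hp_def, measureReal_def, measure_univ, ENNReal.toReal_one]; ring
    -- mgf of the sum
    have hmgfS : ∀ s : ℝ, mgf (∑ k ∈ Icc 1 n, Y k) ℙ s
        ≤ Real.exp ((Real.exp s - 1) * A n) := by
      intro s
      rw [hindepY.mgf_sum hYmeas]
      calc ∏ k ∈ Icc 1 n, mgf (Y k) ℙ s
          ≤ ∏ k ∈ Icc 1 n, Real.exp ((Real.exp s - 1) * p k) := by
            refine Finset.prod_le_prod (fun k _ => mgf_nonneg) (fun k _ => ?_)
            rw [hmgfY s k, add_comm]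
            exact Real.add_one_le_exp _
        _ = Real.exp (∑ k ∈ Icc 1 n, (Real.exp s - 1) * p k) := by
            rw [Real.exp_sum]
        _ = Real.exp ((Real.exp s - 1) * A n) := by
            rw [hA n, Finset.mul_sum]
    -- integrability
    have hSbound : ∀ ω, 0 ≤ (∑ k ∈ Icc 1 n, Y k) ω ∧ (∑ k ∈ Icc 1 n, Y k) ω ≤ n := by
      intro ω
      rw [Finset.sum_apply]
      constructor
      · exact Finset.sum_nonneg fun k _ => by by_cases h : t n < X k ω <;> simp [hY_def, h]
      · calc (∑ k ∈ Icc 1 n, Y k ω) ≤ ∑ k ∈ Icc 1 n, 1 :=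
              Finset.sum_le_sum fun k _ => by by_cases h : t n < X k ω <;> simp [hY_def, h]
          _ ≤ n := by simp [Nat.Icc_eq_range']
    have hSm : Measurable (∑ k ∈ Icc 1 n, Y k) := by
      have : (∑ k ∈ Icc 1 n, Y k) = fun ω => ∑ k ∈ Icc 1 n, Y k ω := by
        funext ω; rw [Finset.sum_apply]
      rw [this]
      exact Finset.measurable_sum _ fun k _ => hYmeas k
    have hint : ∀ s : ℝ, Integrable (fun ω => Real.exp (s * (∑ k ∈ Icc 1 n, Y k) ω)) ℙ := by
      intro s
      refine Integrable.mono' (integrable_const (Real.exp (|s| * n)))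
        ((hSm.const_mul s).exp.aestronglyMeasurable) (ae_of_all _ fun ω => ?_)
      rw [Real.norm_eq_abs, abs_of_pos (Real.exp_pos _), Real.exp_le_exp]
      obtain ⟨h0, hn'⟩ := hSbound ω
      calc s * (∑ k ∈ Icc 1 n, Y k) ω ≤ |s| * (∑ k ∈ Icc 1 n, Y k) ω :=
            mul_le_mul_of_nonneg_right (le_abs_self s) h0
        _ ≤ |s| * n := mul_le_mul_of_nonneg_left hn' (abs_nonneg s)
    set lam : ℝ := ε / 2 with hlam_def
    have hlam_pos : 0 < lam := by positivity
    have hlam1 : |lam| ≤ 1 := by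
      rw [abs_of_pos hlam_pos]; linarith
    have hexp1 : Real.exp lam ≤ 1 + lam + (3/4) * lam ^ 2 := exp_le_quad hlam1
    have hexp2 : Real.exp (-lam) ≤ 1 - lam + (3/4) * lam ^ 2 := by
      have := exp_le_quad (x := -lam) (by rwa [abs_neg])
      nlinarith [this]
    -- upper tail
    have upper : (ℙ {ω | (1 + ε) * A n ≤ (∑ k ∈ Icc 1 n, Y k) ω}).toReal
        ≤ Real.exp (- c * A n) := by
      calc (ℙ {ω | (1 + ε) * A n ≤ (∑ k ∈ Icc 1 n, Y k) ω}).toReal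
          ≤ Real.exp (-lam * ((1 + ε) * A n)) * mgf (∑ k ∈ Icc 1 n, Y k) ℙ lam :=
            measure_ge_le_exp_mul_mgf _ hlam_pos.le (hint lam)
        _ ≤ Real.exp (-lam * ((1 + ε) * A n)) * Real.exp ((Real.exp lam - 1) * A n) := by
            exact mul_le_mul_of_nonneg_left (hmgfS lam) (Real.exp_pos _).le
        _ = Real.exp (-lam * ((1 + ε) * A n) + (Real.exp lam - 1) * A n) :=
            (Real.exp_add _ _).symm
        _ ≤ Real.exp (- c * A n) := by
            rw [Real.exp_le_exp]
            have : -lam * ((1 + ε) * A n) + (Real.exp lam - 1) * A n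
                = (-lam * (1 + ε) + (Real.exp lam - 1)) * A n := by ring
            rw [this, hc_def, hlam_def]
            have hb : -(ε/2) * (1 + ε) + (Real.exp (ε/2) - 1) ≤ - (ε ^ 2 / 4) := by
              rw [hlam_def] at hexp1; nlinarith
            nlinarith [mul_le_mul_of_nonneg_right hb hA_nonneg]
    -- lower tail
    have lower : (ℙ {ω | (∑ k ∈ Icc 1 n, Y k) ω ≤ (1 - ε) * A n}).toReal
        ≤ Real.exp (- c * A n) := by
      calc (ℙ {ω | (∑ k ∈ Icc 1 n, Y k) ω ≤ (1 - ε) * A n}).toReal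
          ≤ Real.exp (-(-lam) * ((1 - ε) * A n)) * mgf (∑ k ∈ Icc 1 n, Y k) ℙ (-lam) :=
            measure_le_le_exp_mul_mgf _ (by linarith) (hint (-lam))
        _ ≤ Real.exp (lam * ((1 - ε) * A n)) * Real.exp ((Real.exp (-lam) - 1) * A n) := by
            rw [neg_neg]
            exact mul_le_mul_of_nonneg_left (hmgfS (-lam)) (Real.exp_pos _).le
        _ = Real.exp (lam * ((1 - ε) * A n) + (Real.exp (-lam) - 1) * A n) :=
            (Real.exp_add _ _).symm
        _ ≤ Real.exp (- c * A n) := by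
            rw [Real.exp_le_exp]
            have : lam * ((1 - ε) * A n) + (Real.exp (-lam) - 1) * A n
                = (lam * (1 - ε) + (Real.exp (-lam) - 1)) * A n := by ring
            rw [this, hc_def, hlam_def]
            have hb : (ε/2) * (1 - ε) + (Real.exp (-(ε/2)) - 1) ≤ - (ε ^ 2 / 4) := by
              rw [hlam_def] at hexp2; nlinarith
            nlinarith [mul_le_mul_of_nonneg_right hb hA_nonneg]
    -- combine
    have hincl : {ω | ε * A n ≤ |(∑ k ∈ Icc 1 n, if t n < X k ω then (1 : ℝ) else 0) - A n|}
        ⊆ {ω | (1 + ε) * A n ≤ (∑ k ∈ Icc 1 n, Y k) ω}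
          ∪ {ω | (∑ k ∈ Icc 1 n, Y k) ω ≤ (1 - ε) * A n} := by
      intro ω hω
      simp only [Set.mem_setOf_eq] at hω
      have hsum_eq : (∑ k ∈ Icc 1 n, Y k) ω
          = ∑ k ∈ Icc 1 n, if t n < X k ω then (1 : ℝ) else 0 := by
        rw [Finset.sum_apply]
      rcases le_abs.mp hω with h | h
      · left
        simp only [Set.mem_setOf_eq, hsum_eq]; linarith
      · right
        simp only [Set.mem_setOf_eq, hsum_eq]; linarith
    calc (ℙ {ω | ε * A n ≤
          |(∑ k ∈ Icc 1 n, if t n < X k ω then (1 : ℝ) else 0) - A n|}).toReal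
        ≤ ((ℙ {ω | (1 + ε) * A n ≤ (∑ k ∈ Icc 1 n, Y k) ω})
            + (ℙ {ω | (∑ k ∈ Icc 1 n, Y k) ω ≤ (1 - ε) * A n})).toReal := by
          refine ENNReal.toReal_mono (by finiteness) ?_
          exact le_trans (measure_mono hincl) (measure_union_le _ _)
      _ = (ℙ {ω | (1 + ε) * A n ≤ (∑ k ∈ Icc 1 n, Y k) ω}).toReal
            + (ℙ {ω | (∑ k ∈ Icc 1 n, Y k) ω ≤ (1 - ε) * A n}).toReal :=
          ENNReal.toReal_add (measure_ne_top _ _) (measure_ne_top _ _)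
      _ ≤ 2 * Real.exp (- c * A n) := by linarith
  -- Borel–Cantelli
  refine measure_limsup_atTop_eq_zero ?_
  have hbd : ∀ n : ℕ, ℙ {ω | ε * A n ≤
      |(∑ k ∈ Icc 1 n, if t n < X k ω then (1 : ℝ) else 0) - A n|}
      ≤ ENNReal.ofReal (2 * Real.exp (- c * A n)) := by
    intro n
    rw [← ENNReal.ofReal_toReal (measure_ne_top _ _)]
    exact ENNReal.ofReal_le_ofReal (key n)
  have hsummable : Summable (fun n : ℕ => 2 * Real.exp (- c * A n)) :=
    (hs c hc hcc₀).mul_left 2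
  refine ne_top_of_le_ne_top ?_ (ENNReal.tsum_le_tsum hbd)
  rw [← ENNReal.ofReal_tsum_of_nonneg (fun n => by positivity) hsummable]
  exact ENNReal.ofReal_ne_top
end

section
/- Let (λ_j)_{j≥0} be strictly increasing with λ_0 = 0, λ_j ≥ 1 for j ≥ 1, λ_j → ∞, and ℓ = sup_j (λ_{j+1} - λ_j) < ∞. For u ≥ 1 let j_u be the unique index with λ_{j_u - 1} ≤ u < λ_{j_u}, and define φ(u) = Σ_{j=2}^{j_u - 1} (λ_j - λ_{j-1})/λ_{j-1}. Then for every u ≥ 1, φ(u) ≥ log u - log λ_1 - ℓ. -/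
/-!
Each term `(λ_j - λ_{j-1}) / λ_{j-1}` dominates `log λ_j - log λ_{j-1}` (since `log x ≤ x - 1`), so the
sum telescopes to at least `log λ_{j_u - 1} - log λ_1`. Finally `λ_{j_u - 1} ≤ u < λ_{j_u - 1} + ℓ`
with `λ_{j_u - 1} ≥ 1`, so the same inequality bounds `log u - log λ_{j_u - 1}` by `ℓ`.
-/

open Finset Filter Real

lemma log_sub_log_le_sub_div {a b : ℝ} (ha : 0 < a) (hb : 0 < b) :
    log b - log a ≤ (b - a) / a := by
  rw [← log_div hb.ne' ha.ne', sub_div, div_self ha.ne']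
  exact log_le_sub_one_of_pos (div_pos hb ha)

lemma log_le_log_add_of_le_add {a u ℓ : ℝ} (ha : 1 ≤ a) (hau : a ≤ u) (huℓ : u ≤ a + ℓ) :
    log u ≤ log a + ℓ := by
  have ha₀ : 0 < a := by linarith
  have hlog := log_sub_log_le_sub_div ha₀ (ha₀.trans_le hau)
  have hdiv : (u - a) / a ≤ u - a := div_le_self (by linarith) ha
  linarith

lemma log_sub_log_one_le_sum_div (lam : ℕ → ℝ) (hpos : ∀ j, 1 ≤ j → 0 < lam j)
    {n : ℕ} (hn : 1 ≤ n) :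
    log (lam n) - log (lam 1) ≤ ∑ j ∈ Icc 2 n, (lam j - lam (j - 1)) / lam (j - 1) := by
  induction n, hn using Nat.le_induction with
  | base => simp
  | succ n hn ih =>
    rw [sum_Icc_succ_top (by omega), Nat.add_sub_cancel]
    have hstep := log_sub_log_le_sub_div (hpos n hn) (hpos (n + 1) (by omega))
    linarith

theorem stmt9_general (lam : ℕ → ℝ)
    (h1 : ∀ j, 1 ≤ j → 1 ≤ lam j)
    (ℓ : ℝ) (hgap : ∀ j, lam (j + 1) - lam j ≤ ℓ)
    (ju : ℝ → ℕ) (hju : ∀ u : ℝ, 1 ≤ u → 1 ≤ ju u ∧ lam (ju u - 1) ≤ u ∧ u < lam (ju u))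
    (φ : ℝ → ℝ)
    (hφ : ∀ u, φ u = ∑ j ∈ Icc 2 (ju u - 1), (lam j - lam (j - 1)) / lam (j - 1)) :
    ∀ u : ℝ, 1 ≤ u → Real.log u - Real.log (lam 1) - ℓ ≤ φ u := by
  intro u hu
  obtain ⟨hju₁, hlow, hhigh⟩ := hju u hu
  obtain ⟨n, hn⟩ : ∃ n, ju u = n + 1 := ⟨ju u - 1, by omega⟩
  rw [hn] at hlow hhigh
  rw [Nat.add_sub_cancel] at hlow
  rw [hφ, hn, Nat.add_sub_cancel]
  have hu_lt : u < lam n + ℓ := by linarith [hgap n]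
  rcases Nat.eq_zero_or_pos n with rfl | hn₁
  · have hlog : log u ≤ log (lam 1) := log_le_log (by linarith) hhigh.le
    have hℓ : 0 ≤ ℓ := by linarith
    simp only [Icc_eq_empty_of_lt, Nat.ofNat_pos, sum_empty]
    linarith
  · have hpos : ∀ j, 1 ≤ j → 0 < lam j := fun j hj => one_pos.trans_le (h1 j hj)
    have hsum := log_sub_log_one_le_sum_div lam hpos hn₁
    have hlast := log_le_log_add_of_le_add (h1 n hn₁) hlow hu_lt.le
    linarith

/-- Lemma 4(a): for a good sequence `(λ_j)` with gap bound `ℓ` and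
`φ(u) = Σ_{j=2}^{j_u - 1} (λ_j - λ_{j-1})/λ_{j-1}`, one has
`φ(u) ≥ log u - log λ_1 - ℓ` for every `u ≥ 1`. -/
theorem stmt9 (lam : ℕ → ℝ) (hmono : StrictMono lam) (h0 : lam 0 = 0)
    (h1 : ∀ j, 1 ≤ j → 1 ≤ lam j) (htop : Tendsto lam atTop atTop)
    (ℓ : ℝ) (hgap : ∀ j, lam (j + 1) - lam j ≤ ℓ)
    (ju : ℝ → ℕ) (hju : ∀ u : ℝ, 1 ≤ u → 1 ≤ ju u ∧ lam (ju u - 1) ≤ u ∧ u < lam (ju u))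
    (φ : ℝ → ℝ)
    (hφ : ∀ u, φ u = ∑ j ∈ Icc 2 (ju u - 1), (lam j - lam (j - 1)) / lam (j - 1)) :
    ∀ u : ℝ, 1 ≤ u → Real.log u - Real.log (lam 1) - ℓ ≤ φ u :=
  stmt9_general lam h1 ℓ hgap ju hju φ hφ
end

section
/- Let (λ_j) be a good sequence (strictly increasing, λ_0 = 0, λ_j ≥ 1 for j ≥ 1, λ_j → ∞, sup_j(λ_{j+1}-λ_j) = ℓ < ∞) and φ(u) = Σ_{j=2}^{j_u - 1} (λ_j - λ_{j-1})/λ_{j-1}. Then for every ε > 0 there exists U such that for all u ≥ U, φ(u) ≤ (1+ε)(log u - log λ_1). -/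
/-!
Each increment satisfies `(λ_j - λ_{j-1}) / λ_{j-1} ≤ (λ_j / λ_{j-1}) (log λ_j - log λ_{j-1})`,
and since the gaps are bounded by `ℓ` while `λ_j → ∞`, the ratio `λ_j / λ_{j-1}` is eventually
at most `1 + ε/2`. Past that point the sum telescopes against `log λ_j`, so
`φ(u) ≤ C + (1 + ε/2) log u`, and the constant `C` is absorbed by the remaining `(ε/2) log u`.
-/

open Finset Filter Real

/-- The partial sum `D_n` of the paper. -/
noncomputable def gapSum (lam : ℕ → ℝ) (n : ℕ) : ℝ :=
  ∑ j ∈ Icc 2 n, (lam j - lam (j - 1)) / lam (j - 1)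

lemma sub_div_le_mul_log_sub {a b δ : ℝ} (hb : 0 < b) (hab : b ≤ a) (hδ : a - b ≤ δ * b) :
    (a - b) / b ≤ (1 + δ) * (log a - log b) := by
  have ha : 0 < a := hb.trans_le hab
  have hlog : (a - b) / a ≤ log a - log b := by
    have := one_sub_inv_le_log_of_pos (div_pos ha hb)
    rwa [log_div ha.ne' hb.ne', inv_div, one_sub_div ha.ne'] at this
  calc (a - b) / b = a / b * ((a - b) / a) := by field_simp
    _ ≤ (1 + δ) * (log a - log b) := by
      have hδ0 : 0 ≤ δ := nonneg_of_mul_nonneg_left (by linarith) hb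
      gcongr
      rw [div_le_iff₀ hb]; linarith

lemma gapSum_le_add_log {lam : ℕ → ℝ} (hmono : Monotone lam) {ℓ δ : ℝ}
    (hgap : ∀ j, lam (j + 1) - lam j ≤ ℓ) (hδ : 0 ≤ δ) {N : ℕ} (hN : 1 ≤ N)
    (hpos : 0 < lam N) (hℓ : ℓ ≤ δ * lam N) {m : ℕ} (hm : N ≤ m) :
    gapSum lam m ≤ gapSum lam N + (1 + δ) * (log (lam m) - log (lam N)) := by
  induction m, hm using Nat.le_induction with
  | base => simp
  | succ m hm ih =>
    have hNm : lam N ≤ lam m := hmono hm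
    have hstep : (lam (m + 1) - lam m) / lam m ≤ (1 + δ) * (log (lam (m + 1)) - log (lam m)) :=
      sub_div_le_mul_log_sub (hpos.trans_le hNm) (hmono m.le_succ)
        ((hgap m).trans (hℓ.trans (mul_le_mul_of_nonneg_left hNm hδ)))
    rw [gapSum, sum_Icc_succ_top (by omega), Nat.add_sub_cancel, ← gapSum]
    linarith

lemma eventually_add_mul_log_le (C c : ℝ) {ε : ℝ} (hε : 0 < ε) :
    ∀ᶠ u in atTop, C + (1 + ε / 2) * log u ≤ (1 + ε) * (log u - c) := by
  filter_upwards [tendsto_log_atTop.eventually_ge_atTop (2 * (C + (1 + ε) * c) / ε)] with u hu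
  rw [div_le_iff₀ hε] at hu
  linarith

theorem stmt10_general (lam : ℕ → ℝ) (hmono : StrictMono lam)
    (htop : Tendsto lam atTop atTop)
    (ℓ : ℝ) (hgap : ∀ j, lam (j + 1) - lam j ≤ ℓ)
    (ju : ℝ → ℕ) (hju : ∀ u : ℝ, 1 ≤ u → 1 ≤ ju u ∧ lam (ju u - 1) ≤ u ∧ u < lam (ju u))
    (φ : ℝ → ℝ)
    (hφ : ∀ u, φ u = ∑ j ∈ Icc 2 (ju u - 1), (lam j - lam (j - 1)) / lam (j - 1)) :
    ∀ ε > (0 : ℝ), ∃ U : ℝ, ∀ u, U ≤ u →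
      φ u ≤ (1 + ε) * (Real.log u - Real.log (lam 1)) := by
  intro ε hε
  obtain ⟨N, hN, hlamN⟩ : ∃ N, 1 ≤ N ∧ max 1 (2 * ℓ / ε) ≤ lam N :=
    ((eventually_ge_atTop 1).and (htop.eventually_ge_atTop _)).exists
  have hlamN1 : 1 ≤ lam N := (le_max_left _ _).trans hlamN
  have hℓ : ℓ ≤ ε / 2 * lam N := by
    have := (le_max_right _ _).trans hlamN
    rw [div_le_iff₀ hε] at this
    linarith
  obtain ⟨U, hU⟩ := eventually_atTop.1 ((eventually_ge_atTop (lam N)).and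
    (eventually_add_mul_log_le (gapSum lam N) (log (lam 1)) hε))
  refine ⟨U, fun u hu => ?_⟩
  obtain ⟨hNu, hlarge⟩ := hU u hu
  obtain ⟨-, hlow, hhigh⟩ := hju u (hlamN1.trans hNu)
  have hNj : N ≤ ju u - 1 := by
    have := hmono.lt_iff_lt.1 (hNu.trans_lt hhigh)
    omega
  have hpos : 0 < lam (ju u - 1) := by linarith [hmono.monotone hNj]
  calc φ u = gapSum lam (ju u - 1) := hφ u
    _ ≤ gapSum lam N + (1 + ε / 2) * (log (lam (ju u - 1)) - log (lam N)) :=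
      gapSum_le_add_log hmono.monotone hgap (by positivity) hN (by linarith) hℓ hNj
    _ ≤ gapSum lam N + (1 + ε / 2) * log u := by
      gcongr
      linarith [log_le_log hpos hlow, log_nonneg hlamN1]
    _ ≤ (1 + ε) * (log u - log (lam 1)) := hlarge

/-- Lemma 4(b): for a good sequence `(λ_j)` and
`φ(u) = Σ_{j=2}^{j_u - 1} (λ_j - λ_{j-1})/λ_{j-1}`, for every `ε > 0` one has
`φ(u) ≤ (1+ε)(log u - log λ_1)` for all sufficiently large `u`. -/
theorem stmt10 (lam : ℕ → ℝ) (hmono : StrictMono lam) (h0 : lam 0 = 0)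
    (h1 : ∀ j, 1 ≤ j → 1 ≤ lam j) (htop : Tendsto lam atTop atTop)
    (ℓ : ℝ) (hgap : ∀ j, lam (j + 1) - lam j ≤ ℓ)
    (ju : ℝ → ℕ) (hju : ∀ u : ℝ, 1 ≤ u → 1 ≤ ju u ∧ lam (ju u - 1) ≤ u ∧ u < lam (ju u))
    (φ : ℝ → ℝ)
    (hφ : ∀ u, φ u = ∑ j ∈ Icc 2 (ju u - 1), (lam j - lam (j - 1)) / lam (j - 1)) :
    ∀ ε > (0 : ℝ), ∃ U : ℝ, ∀ u, U ≤ u →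
      φ u ≤ (1 + ε) * (Real.log u - Real.log (lam 1)) :=
  stmt10_general lam hmono htop ℓ hgap ju hju φ hφ
end

section
/- Under the assumptions of the previous statement (C₁ ≤ F(x)/x ≤ C₂ on (0,1], Λ a good sequence with gap bound ℓ), there exists a constant C₃ > 0 such that for all sufficiently large t, E[X·1_{X ≤ t}] ≥ C₃ log t. Consequently, if X_1, ..., X_n are such variables and t_n → ∞, then d_n = Σ_{k=1}^n E[X_k 1_{X_k ≤ t_n}] ≥ C n log t_n for large n. -/
open MeasureTheory ProbabilityTheory Finset Filter

/-- Lemma 6(i): under `C₁ ≤ F(x)/x ≤ C₂` on `(0,1]` and `Λ` a good sequence, the truncated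
expectations of variables supported on `Λ` with law `P(X_k = λ_s) = F(1/λ_{s-1}) - F(1/λ_s)`
satisfy `E[X_k 1_{X_k ≤ t}] ≥ C₃ log t` for large `t`; consequently, if `t_n → ∞` then
`d_n = Σ_{k=1}^n E[X_k 1_{X_k ≤ t_n}] ≥ C n log t_n` for large `n`. -/
theorem stmt15 {Ω : Type*} [MeasureSpace Ω] [IsProbabilityMeasure (ℙ : Measure Ω)]
    (F : ℝ → ℝ) (hF0 : F 0 = 0) (hF1 : F 1 = 1)
    (C₁ C₂ : ℝ) (hC : 0 < C₁ ∧ C₁ < C₂)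
    (hFbd : ∀ x : ℝ, 0 < x → x ≤ 1 → C₁ ≤ F x / x ∧ F x / x ≤ C₂)
    (lam : ℕ → ℝ) (hmono : StrictMono lam) (h0 : lam 0 = 0)
    (h1 : ∀ j, 1 ≤ j → 1 ≤ lam j) (htop : Tendsto lam atTop atTop)
    (ℓ : ℝ) (hgap : ∀ j, lam (j + 1) - lam j ≤ ℓ)
    (X : ℕ → Ω → ℝ) (hXmeas : ∀ k, Measurable (X k))
    (hXval : ∀ k ω, ∃ s : ℕ, 1 ≤ s ∧ X k ω = lam s)
    (hXlaw : ∀ k, ∀ s : ℕ, 1 ≤ s → ℙ {ω | X k ω = lam s} =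
      ENNReal.ofReal ((if s = 1 then 1 else F (1 / lam (s - 1))) - F (1 / lam s)))
    (t : ℕ → ℝ) (ht : ∀ n, 0 < t n) (httop : Tendsto t atTop atTop)
    (d : ℕ → ℝ)
    (hd : ∀ n, d n = ∑ k ∈ Icc 1 n,
      ∫ ω, X k ω * Set.indicator {ω' | X k ω' ≤ t n} 1 ω) :
    (∃ C₃ > (0 : ℝ), ∃ T : ℝ, ∀ s : ℝ, T ≤ s → ∀ k,
      C₃ * Real.log s ≤ ∫ ω, X k ω * Set.indicator {ω' | X k ω' ≤ s} 1 ω) ∧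
    (∃ C > (0 : ℝ), ∀ᶠ n in atTop, C * n * Real.log (t n) ≤ d n) := by
  obtain ⟨hC₁, hC₁₂⟩ := hC
  have hlam1 : (1:ℝ) ≤ lam 1 := h1 1 le_rfl
  have hlampos : ∀ j, 1 ≤ j → 0 < lam j := fun j hj =>
    lt_of_lt_of_le one_pos (h1 j hj)
  have hmonole := hmono.monotone
  have hℓ : 1 ≤ ℓ := le_trans hlam1 (by have := hgap 0; rwa [h0, sub_zero] at this)
  -- bounds C₁ / λ_j ≤ F(1/λ_j)  and  λ_j * F(1/λ_j) ≤ C₂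
  have hFb : ∀ j, 1 ≤ j → C₁ / lam j ≤ F (1 / lam j) ∧ lam j * F (1 / lam j) ≤ C₂ := by
    intro j hj
    have hpos := hlampos j hj
    have hx : (0:ℝ) < 1 / lam j := by positivity
    have hx1 : 1 / lam j ≤ 1 := by
      rw [div_le_one hpos]; exact h1 j hj
    obtain ⟨hlo, hhi⟩ := hFbd _ hx hx1
    constructor
    · have := (le_div_iff₀ hx).mp hlo
      calc C₁ / lam j = C₁ * (1 / lam j) := by ring
        _ ≤ F (1 / lam j) := this
    · have := (div_le_iff₀ hx).mp hhi
      calc lam j * F (1 / lam j) ≤ lam j * (C₂ * (1 / lam j)) := by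
            exact mul_le_mul_of_nonneg_left this hpos.le
        _ = C₂ := by field_simp
  set q : ℕ → ℝ := fun j => (if j = 1 then 1 else F (1 / lam (j - 1))) - F (1 / lam j) with hqdef
  -- key Abel-summation lower bound
  have hS : ∀ m : ℕ, 1 ≤ m →
      lam 1 - lam m * F (1 / lam m) + C₁ * (Real.log (lam m) - Real.log (lam 1)) ≤
        ∑ j ∈ Icc 1 m, lam j * q j := by
    intro m hm
    induction m, hm using Nat.le_induction with
    | base =>
        have hq1 : q 1 = 1 - F (1 / lam 1) := by simp [hqdef]
        rw [Icc_self, sum_singleton, hq1, sub_self, mul_zero, add_zero, mul_sub, mul_one]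
    | succ m hm ih =>
        rw [Finset.sum_Icc_succ_top (by omega : 1 ≤ m + 1)]
        have hq : q (m + 1) = F (1 / lam m) - F (1 / lam (m + 1)) := by
          simp only [hqdef]
          rw [if_neg (by omega)]
          norm_num
        rw [hq]
        have hposm := hlampos m hm
        have hposm1 := hlampos (m + 1) (by omega)
        have hstep : C₁ * (Real.log (lam (m + 1)) - Real.log (lam m)) ≤
            (lam (m + 1) - lam m) * F (1 / lam m) := by
          have hrat : Real.log (lam (m + 1)) - Real.log (lam m) ≤
              (lam (m + 1) - lam m) / lam m := by
            have h2 : Real.log (lam (m + 1) / lam m) ≤ lam (m + 1) / lam m - 1 :=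
              Real.log_le_sub_one_of_pos (by positivity)
            rw [Real.log_div (ne_of_gt hposm1) (ne_of_gt hposm)] at h2
            calc Real.log (lam (m + 1)) - Real.log (lam m)
                ≤ lam (m + 1) / lam m - 1 := h2
              _ = (lam (m + 1) - lam m) / lam m := by field_simp
          have hdnn : 0 ≤ lam (m + 1) - lam m := by
            have := hmono (Nat.lt_succ_self m); linarith
          calc C₁ * (Real.log (lam (m + 1)) - Real.log (lam m))
              ≤ C₁ * ((lam (m + 1) - lam m) / lam m) :=
                mul_le_mul_of_nonneg_left hrat hC₁.le
            _ = (lam (m + 1) - lam m) * (C₁ / lam m) := by ring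
            _ ≤ (lam (m + 1) - lam m) * F (1 / lam m) :=
                mul_le_mul_of_nonneg_left (hFb m hm).1 hdnn
        nlinarith [ih]
  -- integral lower bound by the partial sum, whenever λ_m ≤ s
  have hInt : ∀ (s : ℝ) (k : ℕ) (m : ℕ), 1 ≤ m → lam m ≤ s →
      ∑ j ∈ Icc 1 m, lam j * q j ≤
        ∫ ω, X k ω * Set.indicator {ω' | X k ω' ≤ s} 1 ω := by
    intro s k m hm hms
    have hB : MeasurableSet {ω' | X k ω' ≤ s} := measurableSet_le (hXmeas k) measurable_const
    have hA : ∀ j : ℕ, MeasurableSet {ω | X k ω = lam j} := fun j =>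
      (hXmeas k) (measurableSet_singleton (lam j))
    set f : Ω → ℝ := fun ω => X k ω * Set.indicator {ω' | X k ω' ≤ s} 1 ω with hf
    set g : Ω → ℝ := fun ω =>
      ∑ j ∈ Icc 1 m, lam j * Set.indicator {ω' | X k ω' = lam j} 1 ω with hg
    have hfmeas : Measurable f := (hXmeas k).mul (measurable_one.indicator hB)
    have hfbound : ∀ ω, 0 ≤ f ω ∧ f ω ≤ max s 0 := by
      intro ω
      obtain ⟨s', hs', hXeq⟩ := hXval k ω
      have hXpos : 0 < X k ω := hXeq ▸ hlampos s' hs'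
      by_cases hω : ω ∈ {ω' | X k ω' ≤ s}
      · rw [hf]
        simp only [Set.indicator_of_mem hω, Pi.one_apply, mul_one]
        exact ⟨hXpos.le, le_max_of_le_left hω⟩
      · rw [hf]
        simp only [Set.indicator_of_notMem hω, mul_zero]
        exact ⟨le_rfl, le_max_right s 0⟩
    have hfint : Integrable f := by
      refine Integrable.mono' (integrable_const (max s 0)) hfmeas.aestronglyMeasurable
        (Filter.Eventually.of_forall fun ω => ?_)
      rw [Real.norm_eq_abs, abs_of_nonneg (hfbound ω).1]
      exact (hfbound ω).2
    have hgint : Integrable g := by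
      apply integrable_finset_sum
      intro j _
      exact ((integrable_const (1:ℝ)).indicator (hA j)).const_mul (lam j)
    have hgle : ∀ ω, g ω ≤ f ω := by
      intro ω
      obtain ⟨s', hs', hXeq⟩ := hXval k ω
      by_cases hcase : s' ≤ m
      · have hmem : s' ∈ Icc 1 m := by simp [hs', hcase]
        have hgω : g ω = lam s' := by
          simp only [hg]
          rw [Finset.sum_eq_single_of_mem s' hmem]
          · have : ω ∈ {ω' | X k ω' = lam s'} := hXeq
            simp [Set.indicator_of_mem this]
          · intro j hj hne
            have : ω ∉ {ω' | X k ω' = lam j} := by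
              simp only [Set.mem_setOf_eq, hXeq]
              intro hlam
              exact hne (hmono.injective hlam).symm
            simp [Set.indicator_of_notMem this]
        have hfω : f ω = lam s' := by
          have hωB : ω ∈ {ω' | X k ω' ≤ s} := by
            simp only [Set.mem_setOf_eq, hXeq]
            exact le_trans (hmonole hcase) hms
          rw [hf]
          simp [Set.indicator_of_mem hωB, hXeq]
        rw [hgω, hfω]
      · have hgω : g ω = 0 := by
          simp only [hg]
          apply Finset.sum_eq_zero
          intro j hj
          have hjm : j ≤ m := (Finset.mem_Icc.mp hj).2
          have : ω ∉ {ω' | X k ω' = lam j} := by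
            simp only [Set.mem_setOf_eq, hXeq]
            intro hlam
            exact hcase ((hmono.injective hlam) ▸ hjm)
          simp [Set.indicator_of_notMem this]
        rw [hgω]
        exact (hfbound ω).1
    have hintle : ∫ ω, g ω ≤ ∫ ω, f ω := integral_mono hgint hfint hgle
    have hgval : ∫ ω, g ω = ∑ j ∈ Icc 1 m, lam j * (ℙ {ω | X k ω = lam j}).toReal := by
      have h1 : ∫ ω, g ω = ∑ j ∈ Icc 1 m, ∫ ω, lam j * Set.indicator {ω' | X k ω' = lam j} 1 ω := by
        simp only [hg]
        exact integral_finset_sum _ (fun j _ =>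
          ((integrable_const (1:ℝ)).indicator (hA j)).const_mul (lam j))
      rw [h1]
      refine Finset.sum_congr rfl fun j _ => ?_
      rw [integral_const_mul, integral_indicator_one (hA j), measureReal_def]
    have hsumle : ∑ j ∈ Icc 1 m, lam j * q j ≤
        ∑ j ∈ Icc 1 m, lam j * (ℙ {ω | X k ω = lam j}).toReal := by
      refine Finset.sum_le_sum fun j hj => ?_
      have hj1 : 1 ≤ j := (Finset.mem_Icc.mp hj).1
      rw [hXlaw k j hj1]
      have : (ENNReal.ofReal (q j)).toReal = max (q j) 0 := ENNReal.toReal_ofReal'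
      have hqle : q j ≤ (ENNReal.ofReal (q j)).toReal := by
        rw [this]; exact le_max_left _ _
      have hlnn : 0 ≤ lam j := (hlampos j hj1).le
      calc lam j * q j ≤ lam j * (ENNReal.ofReal (q j)).toReal :=
            mul_le_mul_of_nonneg_left hqle hlnn
        _ = lam j * (ENNReal.ofReal
              ((if j = 1 then 1 else F (1 / lam (j - 1))) - F (1 / lam j))).toReal := by
            rw [hqdef]
      -- goal closed
    calc ∑ j ∈ Icc 1 m, lam j * q j
        ≤ ∑ j ∈ Icc 1 m, lam j * (ℙ {ω | X k ω = lam j}).toReal := hsumle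
      _ = ∫ ω, g ω := hgval.symm
      _ ≤ ∫ ω, f ω := hintle
  -- choose constants
  set K : ℝ := C₂ - lam 1 + C₁ * Real.log (lam 1) + C₁ * Real.log 2 with hK
  set T : ℝ := max (max (2 * ℓ) (lam 1)) (Real.exp (2 * K / C₁ + 1)) with hT
  have hmain : ∀ s : ℝ, T ≤ s → ∀ k,
      (C₁ / 2) * Real.log s ≤ ∫ ω, X k ω * Set.indicator {ω' | X k ω' ≤ s} 1 ω := by
    intro s hs k
    have hs2ℓ : 2 * ℓ ≤ s := le_trans (le_trans (le_max_left _ _) (le_max_left _ _)) hs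
    have hslam1 : lam 1 ≤ s := le_trans (le_trans (le_max_right _ _) (le_max_left _ _)) hs
    have hsexp : Real.exp (2 * K / C₁ + 1) ≤ s := le_trans (le_max_right _ _) hs
    have hspos : 0 < s := lt_of_lt_of_le (by linarith) hs2ℓ
    -- find m with λ_m ≤ s < λ_{m+1}
    have hex : ∃ j, s < lam j := by
      obtain ⟨N, hN⟩ := (htop.eventually_ge_atTop (s + 1)).exists
      exact ⟨N, by linarith⟩
    obtain ⟨m, hm1, hlamms, hlamm1⟩ : ∃ m, 1 ≤ m ∧ lam m ≤ s ∧ s < lam (m + 1) := by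
      have hn0spec : s < lam (Nat.find hex) := Nat.find_spec hex
      have hn02 : 1 < Nat.find hex := by
        rw [Nat.lt_find_iff]
        intro n hn
        interval_cases n
        · rw [h0]; exact not_lt.mpr hspos.le
        · exact not_lt.mpr hslam1
      refine ⟨Nat.find hex - 1, by omega, ?_, ?_⟩
      · by_contra hgt
        push_neg at hgt
        have := Nat.find_min' hex hgt
        omega
      · have heq : Nat.find hex - 1 + 1 = Nat.find hex := by omega
        rw [heq]; exact hn0spec
    -- λ_m ≥ s/2
    have hlammge : s / 2 ≤ lam m := by
      have := hgap m
      linarith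
    have hlogm : Real.log s - Real.log 2 ≤ Real.log (lam m) := by
      have h1' : Real.log (s / 2) ≤ Real.log (lam m) :=
        Real.log_le_log (by positivity) hlammge
      rwa [Real.log_div (ne_of_gt hspos) (by norm_num)] at h1'
    have hSm := hS m hm1
    have hIm := hInt s k m hm1 hlamms
    have hFm := (hFb m hm1).2
    have hlogs : 2 * K / C₁ + 1 ≤ Real.log s := (Real.le_log_iff_exp_le hspos).mpr hsexp
    have hC₁half : 0 < C₁ / 2 := by positivity
    -- combine
    have hchain : C₁ * Real.log s - K - C₁ * Real.log 2 + C₁ * Real.log 2 ≤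
        ∑ j ∈ Icc 1 m, lam j * q j := by
      have : lam 1 - C₂ + C₁ * (Real.log (lam m) - Real.log (lam 1)) ≤
          ∑ j ∈ Icc 1 m, lam j * q j := by linarith
      have h2 : C₁ * (Real.log s - Real.log 2 - Real.log (lam 1)) ≤
          C₁ * (Real.log (lam m) - Real.log (lam 1)) := by
        apply mul_le_mul_of_nonneg_left _ hC₁.le
        linarith
      rw [hK]; nlinarith
    have hfinal : (C₁ / 2) * Real.log s ≤ ∑ j ∈ Icc 1 m, lam j * q j := by
      have hKle : K ≤ (C₁ / 2) * Real.log s := by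
        have : 2 * K / C₁ ≤ Real.log s := by linarith
        calc K = (C₁ / 2) * (2 * K / C₁) := by field_simp
          _ ≤ (C₁ / 2) * Real.log s := mul_le_mul_of_nonneg_left this hC₁half.le
      nlinarith
    linarith
  refine ⟨⟨C₁ / 2, by positivity, T, hmain⟩, C₁ / 2, by positivity, ?_⟩
  filter_upwards [httop.eventually_ge_atTop T] with n hn
  rw [hd n]
  have hcard : (Icc 1 n).card = n := by rw [Nat.card_Icc]; omega
  calc (C₁ / 2) * (n : ℝ) * Real.log (t n)
      = ∑ _k ∈ Icc 1 n, (C₁ / 2) * Real.log (t n) := by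
        rw [Finset.sum_const, hcard, nsmul_eq_mul]; ring
    _ ≤ ∑ k ∈ Icc 1 n, ∫ ω, X k ω * Set.indicator {ω' | X k ω' ≤ t n} 1 ω :=
        Finset.sum_le_sum fun k _ => hmain (t n) hn k
end

section
/- Let F satisfy F(x)/x → α > 0 as x → 0⁺, let Λ be a good sequence, t_n = n^γ with 0 < γ < 1/2, and d_n = n(Σ_{j=1}^{j_{t_n}-1} F(1/λ_{j-1})(λ_j - λ_{j-1}) - λ_{j_{t_n}-1} F(1/λ_{j_{t_n}})) (with F(1/λ_0) = 1). Then d_n / (n log n) → αγ as n → ∞. -/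
open Finset Filter

private lemma telescope_Ioc (g : ℕ → ℝ) (a : ℕ) :
    ∀ m, a ≤ m → ∑ j ∈ Ioc a m, (g j - g (j - 1)) = g m - g a := by
  intro m hm
  induction m, hm using Nat.le_induction with
  | base => simp
  | succ m hm ih =>
    rw [Finset.sum_Ioc_succ_top hm, ih]
    simp

private lemma log_lower (a b : ℝ) (ha : 1 ≤ a) (hab : a ≤ b) :
    Real.log b - Real.log a ≤ (b - a) / a := by
  have ha0 : 0 < a := by linarith
  have hb0 : 0 < b := by linarith
  have h := Real.log_le_sub_one_of_pos (show 0 < b / a by positivity)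
  rw [Real.log_div hb0.ne' ha0.ne'] at h
  have h2 : b / a - 1 = (b - a) / a := by field_simp
  linarith [h2 ▸ h]

private lemma log_upper (a b ε l : ℝ) (ha : 1 ≤ a) (hab : a ≤ b) (hε : 0 < ε)
    (hba : b - a ≤ l) (hal : l / ε ≤ a) :
    (b - a) / a ≤ (1 + ε) * (Real.log b - Real.log a) := by
  have ha0 : 0 < a := by linarith
  have hb0 : 0 < b := by linarith
  have h := Real.log_le_sub_one_of_pos (show 0 < a / b by positivity)
  rw [Real.log_div ha0.ne' hb0.ne'] at h
  have h1 : (b - a) / b ≤ Real.log b - Real.log a := by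
    have h3 : a / b - 1 = -((b - a) / b) := by field_simp; ring
    linarith [h3 ▸ h]
  have hl : l ≤ ε * a := by
    rw [div_le_iff₀ hε] at hal; linarith
  have hba' : b ≤ (1 + ε) * a := by linarith
  have h2 : (b - a) / a ≤ ((1 + ε) * (b - a)) / b := by
    rw [div_le_div_iff₀ ha0 hb0]
    nlinarith
  have h4 : (1 + ε) * ((b - a) / b) ≤ (1 + ε) * (Real.log b - Real.log a) :=
    mul_le_mul_of_nonneg_left h1 (by linarith)
  calc (b - a) / a ≤ ((1 + ε) * (b - a)) / b := h2
    _ = (1 + ε) * ((b - a) / b) := by rw [mul_div_assoc]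
    _ ≤ _ := h4


set_option maxHeartbeats 1200000 in
/-- Key asymptotic in Theorem 2(b): if `F(x)/x → α > 0` as `x → 0⁺`, `Λ` is a good sequence,
`t_n = n^γ` with `0 < γ < 1/2`, and
`d_n = n (Σ_{j=1}^{j_{t_n}-1} F(1/λ_{j-1})(λ_j - λ_{j-1}) - λ_{j_{t_n}-1} F(1/λ_{j_{t_n}}))`
(with `F(1/λ_0) := 1`), then `d_n/(n log n) → α γ`. -/
theorem stmt19 (F : ℝ → ℝ) (α : ℝ) (hα : 0 < α)
    (hF : Tendsto (fun x => F x / x) (nhdsWithin 0 (Set.Ioi 0)) (nhds α))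
    (lam : ℕ → ℝ) (hmono : StrictMono lam) (h0 : lam 0 = 0)
    (h1 : ∀ j, 1 ≤ j → 1 ≤ lam j) (htop : Tendsto lam atTop atTop)
    (ℓ : ℝ) (hgap : ∀ j, lam (j + 1) - lam j ≤ ℓ)
    (γ : ℝ) (hγ0 : 0 < γ) (hγ : γ < 1 / 2)
    (jt : ℕ → ℕ)
    (hjt : ∀ n : ℕ, 1 ≤ jt n ∧ lam (jt n - 1) ≤ (n : ℝ) ^ γ ∧ (n : ℝ) ^ γ < lam (jt n))
    (d : ℕ → ℝ)
    (hd : ∀ n : ℕ, d n = n * ((∑ j ∈ Icc 1 (jt n - 1),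
        (if j = 1 then 1 else F (1 / lam (j - 1))) * (lam j - lam (j - 1))) -
        lam (jt n - 1) * F (1 / lam (jt n)))) :
    Tendsto (fun n => d n / (n * Real.log n)) atTop (nhds (α * γ)) := by
  set w : ℕ → ℝ := fun j => (if j = 1 then 1 else F (1 / lam (j - 1))) * (lam j - lam (j - 1))
    with hw_def
  set A : ℕ → ℝ := fun n => ∑ j ∈ Icc 1 (jt n - 1), w j with hA_def
  set B : ℕ → ℝ := fun n => lam (jt n - 1) * F (1 / lam (jt n)) with hB_def
  have hlam_nonneg : ∀ k, 0 ≤ lam k := fun k => h0 ▸ hmono.monotone (Nat.zero_le k)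
  have hlog : Tendsto (fun n : ℕ => Real.log n) atTop atTop :=
    Real.tendsto_log_atTop.comp tendsto_natCast_atTop_atTop
  have ht : Tendsto (fun n : ℕ => (n : ℝ) ^ γ) atTop atTop :=
    (tendsto_rpow_atTop hγ0).comp tendsto_natCast_atTop_atTop
  have hJ : ∀ m : ℕ, ∀ᶠ n in atTop, m + 1 ≤ jt n - 1 := by
    intro m
    filter_upwards [ht.eventually_ge_atTop (lam (m + 2))] with n hn
    have h2 := (hjt n).2.2
    have h3 : lam (m + 2) < lam (jt n) := lt_of_le_of_lt hn h2
    have h4 : m + 2 < jt n := hmono.lt_iff_lt.mp h3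
    omega
  have hB_lim : Tendsto (fun n => B n / Real.log n) atTop (nhds 0) := by
    obtain ⟨δ, hδ0, hFδ⟩ := Metric.tendsto_nhdsWithin_nhds.mp hF α hα
    have hBnd : ∀ᶠ n in atTop, 0 ≤ B n ∧ B n ≤ 2 * α := by
      filter_upwards [ht.eventually_gt_atTop (1 / δ)] with n hn
      have hL1 : (1 : ℝ) ≤ lam (jt n) := h1 _ (hjt n).1
      have hL0 : (0 : ℝ) < lam (jt n) := by linarith
      have hLδ : 1 / δ < lam (jt n) := lt_trans hn (hjt n).2.2
      have hx0 : (0 : ℝ) < 1 / lam (jt n) := by positivity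
      have hxδ : 1 / lam (jt n) < δ := by
        rw [div_lt_iff₀ hL0]
        rw [div_lt_iff₀ hδ0] at hLδ
        linarith
      have hdist := hFδ (Set.mem_Ioi.mpr hx0)
        (by rwa [Real.dist_eq, sub_zero, abs_of_pos hx0])
      rw [Real.dist_eq, abs_lt] at hdist
      have hFx0 : 0 < F (1 / lam (jt n)) / (1 / lam (jt n)) := by linarith [hdist.1]
      have hFx2 : F (1 / lam (jt n)) / (1 / lam (jt n)) < 2 * α := by linarith [hdist.2]
      rw [div_lt_iff₀ hx0] at hFx2
      rw [lt_div_iff₀ hx0] at hFx0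
      have hmono' : lam (jt n - 1) ≤ lam (jt n) := hmono.monotone (Nat.sub_le _ _)
      have hc0 : 0 ≤ lam (jt n - 1) := hlam_nonneg _
      constructor
      · exact mul_nonneg hc0 (by nlinarith)
      · have : lam (jt n - 1) * F (1 / lam (jt n)) ≤ lam (jt n - 1) * (2 * α * (1 / lam (jt n))) :=
          mul_le_mul_of_nonneg_left (le_of_lt hFx2) hc0
        calc B n ≤ lam (jt n - 1) * (2 * α * (1 / lam (jt n))) := this
          _ = 2 * α * (lam (jt n - 1) / lam (jt n)) := by ring
          _ ≤ 2 * α * 1 := by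
              refine mul_le_mul_of_nonneg_left ?_ (by linarith)
              rw [div_le_one hL0]; exact hmono'
          _ = 2 * α := mul_one _
    have h2 : Tendsto (fun n : ℕ => 2 * α / Real.log n) atTop (nhds 0) :=
      tendsto_const_nhds.div_atTop hlog
    refine squeeze_zero' ?_ ?_ h2
    · filter_upwards [hBnd, eventually_ge_atTop 2] with n hn h2n
      have hlogn : 0 < Real.log n := Real.log_pos (by exact_mod_cast h2n)
      exact div_nonneg hn.1 hlogn.le
    · filter_upwards [hBnd, eventually_ge_atTop 2] with n hn h2n
      have hlogn : 0 < Real.log n := Real.log_pos (by exact_mod_cast h2n)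
      exact (div_le_div_iff_of_pos_right hlogn).mpr hn.2
  have hℓ1 : (1 : ℝ) ≤ ℓ := by
    have hg := hgap 0
    rw [h0] at hg
    have := h1 1 le_rfl
    linarith
  have hA_lim : Tendsto (fun n => A n / Real.log n) atTop (nhds (α * γ)) := by
    rw [Metric.tendsto_nhds]
    intro ε' hε'
    have hden : (0:ℝ) < 2 * γ * (α + 2) + 1 := by positivity
    set ε : ℝ := min (α / 2) (min 1 (ε' / (2 * γ * (α + 2) + 1))) with hε_def
    have hε0 : 0 < ε := lt_min (by linarith) (lt_min one_pos (by positivity))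
    have hεα : ε ≤ α / 2 := min_le_left _ _
    have hε1 : ε ≤ 1 := le_trans (min_le_right _ _) (min_le_left _ _)
    have hεe : ε ≤ ε' / (2 * γ * (α + 2) + 1) := le_trans (min_le_right _ _) (min_le_right _ _)
    have hεe' : ε * (2 * γ * (α + 2) + 1) ≤ ε' := by
      rw [← le_div_iff₀ hden]; exact hεe
    have hub : (α + ε) * (1 + ε) * γ - α * γ < ε' := by
      have e0 : (α + ε) * (1 + ε) * γ - α * γ = γ * ε * (α + 1 + ε) := by ring
      have e1 : γ * ε * (α + 1 + ε) ≤ γ * ε * (α + 2) := by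
        nlinarith [mul_nonneg (mul_nonneg hγ0.le hε0.le) (sub_nonneg.mpr hε1)]
      have e2 : 2 * (γ * ε * (α + 2)) ≤ ε * (2 * γ * (α + 2) + 1) := by nlinarith
      linarith
    have hlb : ε * γ < ε' := by
      have e1 : 2 * (ε * γ) ≤ ε * (2 * γ * (α + 2) + 1) := by
        nlinarith [mul_nonneg (mul_nonneg hε0.le hγ0.le) (by linarith : (0:ℝ) ≤ α + 1)]
      linarith
    obtain ⟨δ, hδ0, hFδ⟩ := Metric.tendsto_nhdsWithin_nhds.mp hF ε hε0
    obtain ⟨j₀, hj₀⟩ := (htop.eventually_ge_atTop (max (1 / δ) (ℓ / ε) + 1)).exists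
    set j1 := max j₀ 1 with hj1_def
    have hj1_pos : 1 ≤ j1 := le_max_right _ _
    have hMj1 : max (1 / δ) (ℓ / ε) + 1 ≤ lam j1 :=
      le_trans hj₀ (hmono.monotone (le_max_left _ _))
    have hlamj1_1 : 1 ≤ lam j1 := h1 _ hj1_pos
    set C : ℝ := ∑ j ∈ Ioc 0 j1, w j with hC_def
    set K : ℝ := (α + ε) * (1 + ε) with hK_def
    have hKpos : 0 < K := by
      have : 0 < α + ε := by linarith
      have : 0 < 1 + ε := by linarith
      simp only [hK_def]; positivity
    have hbound : ∀ᶠ n : ℕ in atTop,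
        C + (α - ε) * (γ * Real.log n - ℓ - Real.log (lam j1)) ≤ A n ∧
        A n ≤ C + K * (γ * Real.log n - Real.log (lam j1)) := by
      filter_upwards [hJ j1, eventually_ge_atTop 1] with n hn hn1
      obtain ⟨hjtn1, hle, hlt⟩ := hjt n
      have hn1' : (1:ℝ) ≤ (n:ℝ) := by exact_mod_cast hn1
      have hsplit : A n = C + ∑ j ∈ Ioc j1 (jt n - 1), w j := by
        have he : Icc 1 (jt n - 1) = Ioc 0 (jt n - 1) := by
          ext x; simp [Finset.mem_Icc, Finset.mem_Ioc]; omega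
        simp only [hA_def, he]
        rw [← Finset.sum_Ioc_consecutive w (Nat.zero_le j1) (by omega : j1 ≤ jt n - 1)]
      -- per-term bounds on the tail
      have htail_lb : ∀ j ∈ Ioc j1 (jt n - 1),
          (α - ε) * (Real.log (lam j) - Real.log (lam (j-1))) ≤ w j := by
        intro j hj
        rw [Finset.mem_Ioc] at hj
        have hjne : j ≠ 1 := by omega
        have ha1 : 1 ≤ lam (j-1) := h1 _ (by omega)
        have hab : lam (j-1) ≤ lam j := hmono.monotone (by omega)
        have haj1 : lam j1 ≤ lam (j-1) := hmono.monotone (by omega)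
        have ha0 : 0 < lam (j-1) := by linarith
        have hx0 : 0 < 1 / lam (j-1) := by positivity
        have haδ : 1/δ < lam (j-1) := by
          have h5 := le_max_left (1/δ) (ℓ/ε)
          linarith
        have hxδ : 1 / lam (j-1) < δ := by
          rw [div_lt_iff₀ ha0]
          rw [div_lt_iff₀ hδ0] at haδ
          linarith
        have hdist := hFδ (Set.mem_Ioi.mpr hx0)
          (by rwa [Real.dist_eq, sub_zero, abs_of_pos hx0])
        rw [Real.dist_eq, abs_lt] at hdist
        have hFlb : (α - ε) * (1 / lam (j-1)) ≤ F (1 / lam (j-1)) :=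
          le_of_lt ((lt_div_iff₀ hx0).mp (by linarith [hdist.1]))
        have hlog_le := log_lower (lam (j-1)) (lam j) ha1 hab
        have hαε : 0 ≤ α - ε := by linarith
        calc (α - ε) * (Real.log (lam j) - Real.log (lam (j-1)))
            ≤ (α - ε) * ((lam j - lam (j-1)) / lam (j-1)) :=
              mul_le_mul_of_nonneg_left hlog_le hαε
          _ = ((α - ε) * (1 / lam (j-1))) * (lam j - lam (j-1)) := by ring
          _ ≤ F (1 / lam (j-1)) * (lam j - lam (j-1)) :=
              mul_le_mul_of_nonneg_right hFlb (by linarith)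
          _ = w j := by simp only [hw_def, if_neg hjne]
      have htail_ub : ∀ j ∈ Ioc j1 (jt n - 1),
          w j ≤ K * (Real.log (lam j) - Real.log (lam (j-1))) := by
        intro j hj
        rw [Finset.mem_Ioc] at hj
        have hjne : j ≠ 1 := by omega
        have ha1 : 1 ≤ lam (j-1) := h1 _ (by omega)
        have hab : lam (j-1) ≤ lam j := hmono.monotone (by omega)
        have haj1 : lam j1 ≤ lam (j-1) := hmono.monotone (by omega)
        have ha0 : 0 < lam (j-1) := by linarith
        have hx0 : 0 < 1 / lam (j-1) := by positivity
        have haδ : 1/δ < lam (j-1) := by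
          have h5 := le_max_left (1/δ) (ℓ/ε)
          linarith
        have haℓε : ℓ / ε ≤ lam (j-1) := by
          have h5 := le_max_right (1/δ) (ℓ/ε)
          linarith
        have hxδ : 1 / lam (j-1) < δ := by
          rw [div_lt_iff₀ ha0]
          rw [div_lt_iff₀ hδ0] at haδ
          linarith
        have hdist := hFδ (Set.mem_Ioi.mpr hx0)
          (by rwa [Real.dist_eq, sub_zero, abs_of_pos hx0])
        rw [Real.dist_eq, abs_lt] at hdist
        have hFub : F (1 / lam (j-1)) ≤ (α + ε) * (1 / lam (j-1)) :=
          le_of_lt ((div_lt_iff₀ hx0).mp (by linarith [hdist.2]))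
        have hbagap : lam j - lam (j-1) ≤ ℓ := by
          have hg := hgap (j-1)
          have hj' : j - 1 + 1 = j := by omega
          rwa [hj'] at hg
        have hlog_ge := log_upper (lam (j-1)) (lam j) ε ℓ ha1 hab hε0 hbagap haℓε
        calc w j = F (1 / lam (j-1)) * (lam j - lam (j-1)) := by
              simp only [hw_def, if_neg hjne]
          _ ≤ ((α + ε) * (1 / lam (j-1))) * (lam j - lam (j-1)) :=
              mul_le_mul_of_nonneg_right hFub (by linarith)
          _ = (α + ε) * ((lam j - lam (j-1)) / lam (j-1)) := by ring
          _ ≤ (α + ε) * ((1 + ε) * (Real.log (lam j) - Real.log (lam (j-1)))) :=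
              mul_le_mul_of_nonneg_left hlog_ge (by linarith)
          _ = K * (Real.log (lam j) - Real.log (lam (j-1))) := by
              simp only [hK_def]; ring
      have hsum_lb : (α - ε) * (Real.log (lam (jt n - 1)) - Real.log (lam j1))
          ≤ ∑ j ∈ Ioc j1 (jt n - 1), w j := by
        have h := Finset.sum_le_sum htail_lb
        rwa [← Finset.mul_sum,
          telescope_Ioc (fun j => Real.log (lam j)) j1 (jt n - 1) (by omega)] at h
      have hsum_ub : ∑ j ∈ Ioc j1 (jt n - 1), w j
          ≤ K * (Real.log (lam (jt n - 1)) - Real.log (lam j1)) := by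
        have h := Finset.sum_le_sum htail_ub
        rwa [← Finset.mul_sum,
          telescope_Ioc (fun j => Real.log (lam j)) j1 (jt n - 1) (by omega)] at h
      -- log bounds
      have hn0' : (0:ℝ) < (n:ℝ) := by linarith
      have hlogτ : Real.log ((n:ℝ) ^ γ) = γ * Real.log n := Real.log_rpow hn0' γ
      have hJ1 : 1 ≤ lam (jt n - 1) := h1 _ (by omega)
      have hup_log : Real.log (lam (jt n - 1)) ≤ γ * Real.log n := by
        rw [← hlogτ]
        exact Real.log_le_log (by linarith) hle
      have hlo_log : γ * Real.log n - ℓ ≤ Real.log (lam (jt n - 1)) := by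
        have h6 : γ * Real.log n ≤ Real.log (lam (jt n)) := by
          rw [← hlogτ]
          have hτ0 : (0:ℝ) < (n:ℝ) ^ γ := Real.rpow_pos_of_pos hn0' γ
          exact Real.log_le_log hτ0 (le_of_lt hlt)
        have h7 : Real.log (lam (jt n)) - Real.log (lam (jt n - 1)) ≤ ℓ := by
          have hab' : lam (jt n - 1) ≤ lam (jt n) := hmono.monotone (Nat.sub_le _ _)
          have h8 := log_lower (lam (jt n - 1)) (lam (jt n)) hJ1 hab'
          have h9 : lam (jt n) - lam (jt n - 1) ≤ ℓ := by
            have hg := hgap (jt n - 1)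
            have hj' : jt n - 1 + 1 = jt n := by omega
            rwa [hj'] at hg
          have h10 : (lam (jt n) - lam (jt n - 1)) / lam (jt n - 1) ≤ ℓ := by
            rw [div_le_iff₀ (by linarith : (0:ℝ) < lam (jt n - 1))]
            nlinarith
          linarith
        linarith
      have hαε : 0 ≤ α - ε := by linarith
      constructor
      · have : (α - ε) * (γ * Real.log n - ℓ - Real.log (lam j1))
            ≤ (α - ε) * (Real.log (lam (jt n - 1)) - Real.log (lam j1)) := by
          apply mul_le_mul_of_nonneg_left _ hαε
          linarith
        rw [hsplit]
        linarith
      · have : K * (Real.log (lam (jt n - 1)) - Real.log (lam j1))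
            ≤ K * (γ * Real.log n - Real.log (lam j1)) := by
          apply mul_le_mul_of_nonneg_left _ hKpos.le
          linarith
        rw [hsplit]
        linarith
    -- conclude
    set c₁ : ℝ := C - (α - ε) * (ℓ + Real.log (lam j1)) with hc1
    set c₂ : ℝ := C - K * Real.log (lam j1) with hc2
    set η₁ : ℝ := ε' - ε * γ with hη1
    set η₂ : ℝ := ε' - (K * γ - α * γ) with hη2
    have hη₁0 : 0 < η₁ := by simp only [hη1]; linarith
    have hη₂0 : 0 < η₂ := by simp only [hη2]; linarith [hub]
    filter_upwards [hbound,
      hlog.eventually_ge_atTop (max 1 (max (|c₁|/η₁ + 1) (|c₂|/η₂ + 1)))] with n hbnd hlogn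
    have hL0 : (0:ℝ) < Real.log n := lt_of_lt_of_le one_pos (le_trans (le_max_left _ _) hlogn)
    set L : ℝ := Real.log n with hLdef
    have hc1L : |c₁| / L < η₁ := by
      rw [div_lt_iff₀ hL0]
      have h11 : |c₁|/η₁ + 1 ≤ L := le_trans (le_trans (le_max_left _ _) (le_max_right _ _)) hlogn
      have h12 : |c₁| ≤ η₁ * (L - 1) := by
        rw [← div_le_iff₀' hη₁0]
        linarith
      nlinarith
    have hc2L : |c₂| / L < η₂ := by
      rw [div_lt_iff₀ hL0]
      have h11 : |c₂|/η₂ + 1 ≤ L := le_trans (le_trans (le_max_right _ _) (le_max_right _ _)) hlogn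
      have h12 : |c₂| ≤ η₂ * (L - 1) := by
        rw [← div_le_iff₀' hη₂0]
        linarith
      nlinarith
    have hlow : (α - ε) * γ + c₁ / L ≤ A n / L := by
      have heq1 : ((α - ε) * γ * L + c₁) / L = (α - ε) * γ + c₁ / L := by
        rw [add_div, mul_div_assoc, div_self hL0.ne', mul_one]
      have heq2 : (α - ε) * γ * L + c₁ = C + (α - ε) * (γ * L - ℓ - Real.log (lam j1)) := by
        simp only [hc1]; ring
      rw [← heq1]
      exact (div_le_div_iff_of_pos_right hL0).mpr (by rw [heq2]; exact hbnd.1)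
    have hhigh : A n / L ≤ K * γ + c₂ / L := by
      have heq1 : (K * γ * L + c₂) / L = K * γ + c₂ / L := by
        rw [add_div, mul_div_assoc, div_self hL0.ne', mul_one]
      have heq2 : K * γ * L + c₂ = C + K * (γ * L - Real.log (lam j1)) := by
        simp only [hc2]; ring
      rw [← heq1]
      exact (div_le_div_iff_of_pos_right hL0).mpr (by rw [heq2]; exact hbnd.2)
    have habs1 : -(|c₁| / L) ≤ c₁ / L := by
      rw [← neg_div]
      exact (div_le_div_iff_of_pos_right hL0).mpr (neg_abs_le c₁)
    have habs2 : c₂ / L ≤ |c₂| / L :=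
      (div_le_div_iff_of_pos_right hL0).mpr (le_abs_self c₂)
    rw [Real.dist_eq, abs_lt]
    constructor
    · have : α * γ - ε * γ - |c₁| / L ≤ A n / L := by nlinarith
      simp only [hη1] at hc1L
      linarith
    · have : A n / L ≤ K * γ + |c₂| / L := by linarith
      simp only [hη2] at hc2L
      linarith
  have heq : ∀ᶠ n in atTop, A n / Real.log n - B n / Real.log n = d n / (n * Real.log n) := by
    filter_upwards [eventually_ge_atTop 1] with n hn
    have hn0 : ((n : ℝ)) ≠ 0 := by
      have : (1:ℝ) ≤ (n:ℝ) := by exact_mod_cast hn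
      linarith
    rw [hd n, mul_div_mul_left _ _ hn0, sub_div]
  refine Tendsto.congr' heq ?_
  simpa using hA_lim.sub hB_lim
end
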